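/- arXiv:2105.04292 — 10 statements merged into one kernel-verified Lean document; each statement's English description precedes it below -/
import Mathlib

section
/- If n ≥ 6, then the edge general position number of the cycle C_n equals 4, i.e., gp_e(C_n) = 4. -/
/-!
Write `a` for the edge `s(a, a + 1)` of `C_n`. Counting the steps of a walk with sign (forward
`+1`, backward `-1`) lifts it to `ℤ`, and shows that a geodesic of length `L` runs along an arc of
`L` consecutive edges with `2 * L ≤ n`, while conversely every such arc is a geodesic.

No arc of length at most `n / 2` contains both `c` and `c + ⌊n/2⌋`, so the edges
`0, ⌊n/2⌋, 1, 1 + ⌊n/2⌋` are in general position: among any three of them two are antipodal.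
Conversely, let `S` be in general position. If `S` misses an edge `a`, the remaining `n - 1` edges
are covered by two arcs of length at most `n / 2`, each meeting `S` in at most two edges. And `S`
cannot contain every edge, since three consecutive edges lie on a geodesic when `n ≥ 6`.
-/

open SimpleGraph

/-- A walk is a geodesic if its length equals the distance between its endpoints. -/
def IsGeodesic {V : Type*} (G : SimpleGraph V) {u v : V} (p : G.Walk u v) : Prop :=
  p.length = G.dist u v

/-- A set `S` of edges of `G` is an edge general position set if no geodesic of `G`
contains three (distinct) edges of `S`. -/
def IsEdgeGPSet {V : Type*} (G : SimpleGraph V) (S : Set (Sym2 V)) : Prop :=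
  S ⊆ G.edgeSet ∧
  ∀ ⦃u v : V⦄ (p : G.Walk u v), IsGeodesic G p →
    ∀ e₁ ∈ S, ∀ e₂ ∈ S, ∀ e₃ ∈ S,
      e₁ ∈ p.edges → e₂ ∈ p.edges → e₃ ∈ p.edges →
        e₁ = e₂ ∨ e₁ = e₃ ∨ e₂ = e₃

section General

variable {V : Type*} {G : SimpleGraph V} {S : Set (Sym2 V)}

theorem IsEdgeGPSet.ncard_inter_edges_le_two (hS : IsEdgeGPSet G S) {u v : V}
    (p : G.Walk u v) (hp : IsGeodesic G p) : (S ∩ {e | e ∈ p.edges}).ncard ≤ 2 := by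
  by_contra! h
  obtain ⟨a, b, c, ⟨haS, ha⟩, ⟨hbS, hb⟩, ⟨hcS, hc⟩, hab, hac, hbc⟩ :=
    (Set.two_lt_ncard_iff (p.edges.finite_toSet.inter_of_right S)).mp h
  rcases hS.2 p hp a haS b hbS c hcS ha hb hc with h | h | h <;> contradiction

theorem isEdgeGPSet_of_ncard_inter_edges_le_two (hSG : S ⊆ G.edgeSet)
    (hS : ∀ ⦃u v : V⦄ (p : G.Walk u v), IsGeodesic G p →
      (S ∩ {e | e ∈ p.edges}).ncard ≤ 2) :
    IsEdgeGPSet G S := by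
  refine ⟨hSG, fun u v p hp a ha b hb c hc hap hbp hcp => ?_⟩
  by_contra! h
  have h3 : 2 < (S ∩ {e | e ∈ p.edges}).ncard :=
    (Set.two_lt_ncard_iff (p.edges.finite_toSet.inter_of_right S)).mpr
      ⟨a, b, c, ⟨ha, hap⟩, ⟨hb, hbp⟩, ⟨hc, hcp⟩, h⟩
  exact (hS p hp).not_gt h3

end General

open Fin.CommRing

namespace SimpleGraph.cycleGraph

variable {n : ℕ} [NeZero n]

theorem eq_add_one_or_eq_add_one_of_adj {u v : Fin n} (h : (cycleGraph n).Adj u v) :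
    v = u + 1 ∨ u = v + 1 := by
  have h_one {x : Fin n} (hx : x.val = 1) : x = 1 := by
    ext
    rw [hx, Fin.val_one', Nat.one_mod_eq_one.mpr (by omega)]
  rcases cycleGraph_adj'.mp h with h' | h'
  · exact .inr (eq_add_of_sub_eq' (h_one h'))
  · exact .inl (eq_add_of_sub_eq' (h_one h'))

theorem adj_add_one (hn : 1 < n) (u : Fin n) : (cycleGraph n).Adj u (u + 1) := by
  rw [cycleGraph_adj', add_sub_cancel_left, Fin.val_one', Nat.one_mod_eq_one.mpr (by omega)]
  exact Or.inr rfl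

theorem add_one_add_one_ne_self (hn : 2 < n) (u : Fin n) : u + 1 + 1 ≠ u := by
  intro h
  have h2 : (2 : Fin n) = 0 := by linear_combination h
  simp [Fin.ext_iff, Nat.mod_eq_of_lt hn] at h2

def succEdge (a : Fin n) : Sym2 (Fin n) := s(a, a + 1)

theorem succEdge_mem_edgeSet (hn : 1 < n) (a : Fin n) : succEdge a ∈ (cycleGraph n).edgeSet :=
  adj_add_one hn a

theorem exists_succEdge_eq {e : Sym2 (Fin n)} (he : e ∈ (cycleGraph n).edgeSet) :
    ∃ a, succEdge a = e := by
  induction e using Sym2.ind with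
  | h u v =>
    rcases eq_add_one_or_eq_add_one_of_adj ((cycleGraph n).mem_edgeSet.mp he) with rfl | rfl
    exacts [⟨u, rfl⟩, ⟨v, Sym2.eq_swap⟩]

theorem succEdge_injective (hn : 2 < n) : Function.Injective (succEdge (n := n)) := by
  intro a b h
  rcases Sym2.eq_iff.mp h with ⟨rfl, -⟩ | ⟨rfl, h⟩
  · rfl
  · exact absurd h (add_one_add_one_ne_self hn b)

def arc (w : Fin n) (L : ℕ) : Set (Sym2 (Fin n)) :=
  (fun i : ℕ => succEdge (w + (i : Fin n))) '' Set.Iio L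

theorem succEdge_mem_arc_iff (hn : 2 < n) {a w : Fin n} {L : ℕ} :
    succEdge a ∈ arc w L ↔ (a - w).val < L := by
  constructor
  · rintro ⟨i, hi, h⟩
    rw [← succEdge_injective hn h, add_sub_cancel_left, Fin.val_natCast]
    exact (Nat.mod_le i n).trans_lt hi
  · intro h
    exact ⟨(a - w).val, h, by dsimp only; rw [Fin.cast_val_eq_self, add_sub_cancel]⟩

theorem arc_add (w : Fin n) (L M : ℕ) : arc w (L + M) = arc w L ∪ arc (w + L) M := by
  ext e
  simp only [arc, Set.mem_image, Set.mem_Iio, Set.mem_union]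
  constructor
  · rintro ⟨i, hi, rfl⟩
    by_cases hiL : i < L
    · exact .inl ⟨i, hiL, rfl⟩
    · refine .inr ⟨i - L, by omega, ?_⟩
      rw [Nat.cast_sub (by omega)]
      ring_nf
  · rintro (⟨i, hi, rfl⟩ | ⟨i, hi, rfl⟩)
    · exact ⟨i, by omega, rfl⟩
    · exact ⟨L + i, by omega, by push_cast; ring_nf⟩

theorem arc_one (w : Fin n) : arc w 1 = {succEdge w} := by
  simp [arc]

theorem edgeSet_subset_arc (w : Fin n) : (cycleGraph n).edgeSet ⊆ arc w n := by
  intro e he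
  obtain ⟨a, rfl⟩ := exists_succEdge_eq he
  exact ⟨(a - w).val, (a - w).isLt, by dsimp only; rw [Fin.cast_val_eq_self, add_sub_cancel]⟩

theorem injOn_succEdge_add_natCast (hn : 2 < n) (w : Fin n) :
    Set.InjOn (fun i : ℕ => succEdge (w + (i : Fin n))) (Set.Iio n) := by
  intro i hi j hj h
  have := congrArg Fin.val (add_left_cancel (succEdge_injective hn h))
  rwa [Fin.val_natCast, Fin.val_natCast, Nat.mod_eq_of_lt hi, Nat.mod_eq_of_lt hj] at this

theorem ncard_arc (hn : 2 < n) (w : Fin n) {L : ℕ} (hL : L ≤ n) : (arc w L).ncard = L := by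
  rw [arc, ((injOn_succEdge_add_natCast hn w).mono (Set.Iio_subset_Iio hL)).ncard_image]
  simp

-- `displacement p` is the endpoint of the lift of `p` to the universal cover `ℤ` starting at `0`.
def displacement : ∀ {u v : Fin n}, (cycleGraph n).Walk u v → ℤ
  | _, _, .nil => 0
  | u, _, .cons (v := b) _ p => (if b = u + 1 then 1 else -1) + displacement p

@[simp]
theorem displacement_nil {u : Fin n} : displacement (.nil : (cycleGraph n).Walk u u) = 0 := rfl

theorem displacement_cons {u b v : Fin n} (h : (cycleGraph n).Adj u b)
    (p : (cycleGraph n).Walk b v) :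
    displacement (.cons h p) = (if b = u + 1 then 1 else -1) + displacement p := rfl

theorem intCast_displacement : ∀ {u v : Fin n} (p : (cycleGraph n).Walk u v),
    (displacement p : Fin n) = v - u
  | _, _, .nil => by simp
  | u, v, .cons (v := b) h p => by
    rw [displacement_cons, Int.cast_add, intCast_displacement p]
    split_ifs with hb
    · rw [hb]; push_cast; ring
    · rw [(eq_add_one_or_eq_add_one_of_adj h).resolve_left hb]; push_cast; ring

theorem natAbs_displacement_le : ∀ {u v : Fin n} (p : (cycleGraph n).Walk u v),
    (displacement p).natAbs ≤ p.length
  | _, _, .nil => by simp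
  | u, v, .cons (v := b) h p => by
    have := natAbs_displacement_le p
    rw [displacement_cons, Walk.length_cons]
    split_ifs <;> omega

theorem displacement_append : ∀ {u v w : Fin n} (p : (cycleGraph n).Walk u v)
    (q : (cycleGraph n).Walk v w), displacement (p.append q) = displacement p + displacement q
  | _, _, _, .nil, q => by simp
  | u, v, w, .cons (v := b) h p, q => by
    rw [Walk.cons_append, displacement_cons, displacement_cons, displacement_append p q, add_assoc]

theorem displacement_reverse (hn : 2 < n) : ∀ {u v : Fin n} (p : (cycleGraph n).Walk u v),
    displacement p.reverse = -displacement p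
  | _, _, .nil => by simp
  | u, v, .cons (v := b) h p => by
    rw [Walk.reverse_cons, displacement_append, displacement_reverse hn p, displacement_cons,
      displacement_cons, displacement_nil]
    rcases eq_add_one_or_eq_add_one_of_adj h with rfl | rfl
    · simp [(add_one_add_one_ne_self hn u).symm]
    · simp [(add_one_add_one_ne_self hn b).symm]

theorem edges_subset_arc_of_displacement_eq_length :
    ∀ {u v : Fin n} (p : (cycleGraph n).Walk u v),
      displacement p = p.length → ∀ e ∈ p.edges, e ∈ arc u p.length
  | _, _, .nil => by simp
  | u, v, .cons (v := b) h p => by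
    intro hd e he
    have := natAbs_displacement_le p
    rw [displacement_cons, Walk.length_cons] at hd
    split_ifs at hd with hb
    · rw [Walk.length_cons, add_comm, arc_add, arc_one, Nat.cast_one, ← hb]
      rcases List.mem_cons.mp (Walk.edges_cons h p ▸ he) with rfl | he
      · exact .inl (by rw [hb]; rfl)
      · exact .inr (edges_subset_arc_of_displacement_eq_length p (by push_cast at hd; omega) e he)
    · omega

theorem exists_walk_arc_subset (hn : 1 < n) (w : Fin n) : ∀ L : ℕ,
    ∃ p : (cycleGraph n).Walk w (w + L), p.length = L ∧ arc w L ⊆ {e | e ∈ p.edges}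
  | 0 => ⟨Walk.nil.copy rfl (by simp), by simp, by simp [arc]⟩
  | L + 1 => by
    obtain ⟨p, hp, hpL⟩ := exists_walk_arc_subset hn w L
    refine ⟨(p.concat (adj_add_one hn _)).copy rfl (by push_cast; ring), by simp [hp], ?_⟩
    rw [arc_add, arc_one, Walk.edges_copy, Walk.edges_concat, List.concat_eq_append]
    rintro e (he | rfl)
    · exact List.mem_append_left _ (hpL he)
    · exact List.mem_append_right _ (List.mem_singleton_self _)

theorem dist_add_natCast_le (hn : 1 < n) (u : Fin n) (k : ℕ) :
    (cycleGraph n).dist u (u + k) ≤ k := by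
  obtain ⟨p, hp, -⟩ := exists_walk_arc_subset hn u k
  exact (dist_le p).trans_eq hp

theorem dist_le_natAbs (hn : 1 < n) {u v : Fin n} {d : ℤ} (h : (d : Fin n) = v - u) :
    (cycleGraph n).dist u v ≤ d.natAbs := by
  rcases Int.natAbs_eq d with hd | hd
  · rw [hd, Int.cast_natCast] at h
    obtain rfl : v = u + d.natAbs := by linear_combination -h
    exact dist_add_natCast_le hn u _
  · rw [hd, Int.cast_neg, Int.cast_natCast] at h
    obtain rfl : u = v + d.natAbs := by linear_combination h
    rw [dist_comm]
    exact dist_add_natCast_le hn v _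

theorem le_natAbs_of_intCast_eq {d : ℤ} {L : ℕ} (h2L : 2 * L ≤ n) (h : (d : Fin n) = L) :
    L ≤ d.natAbs := by
  obtain ⟨k, hk⟩ := ((CharP.intCast_eq_intCast (Fin n) n (a := d) (b := L)).mp
    (by rw [Int.cast_natCast]; exact h)).dvd
  rcases lt_trichotomy k 0 with hk0 | rfl | hk0
  · have : (n : ℤ) * k ≤ -n := by nlinarith
    omega
  · omega
  · have : (n : ℤ) ≤ n * k := by nlinarith
    omega

theorem two_mul_length_le_of_isGeodesic (hn : 1 < n) {u v : Fin n}
    {p : (cycleGraph n).Walk u v} (hp : IsGeodesic (cycleGraph n) p) : 2 * p.length ≤ n := by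
  have h₁ : (cycleGraph n).dist u v ≤ ((v - u).val : ℤ).natAbs :=
    dist_le_natAbs hn (by rw [Int.cast_natCast, Fin.cast_val_eq_self])
  have h₂ : (cycleGraph n).dist u v ≤ ((v - u).val - n : ℤ).natAbs :=
    dist_le_natAbs hn (by push_cast; rw [Fin.natCast_self, sub_zero])
  have := (v - u).isLt
  rw [IsGeodesic] at hp
  omega

theorem exists_edges_subset_arc_of_isGeodesic (hn : 2 < n) {u v : Fin n}
    {p : (cycleGraph n).Walk u v} (hp : IsGeodesic (cycleGraph n) p) :
    ∃ w, ∀ e ∈ p.edges, e ∈ arc w p.length := by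
  have h_abs : (displacement p).natAbs = p.length :=
    (natAbs_displacement_le p).antisymm
      (hp.trans_le (dist_le_natAbs (by omega) (intCast_displacement p)))
  rcases Int.natAbs_eq (displacement p) with hd | hd
  · exact ⟨u, edges_subset_arc_of_displacement_eq_length p (by rw [hd, h_abs])⟩
  · refine ⟨v, fun e he => ?_⟩
    rw [← Walk.length_reverse]
    refine edges_subset_arc_of_displacement_eq_length p.reverse ?_ e (by simpa using he)
    rw [displacement_reverse hn, hd, h_abs, Walk.length_reverse, neg_neg]

theorem exists_isGeodesic_arc_subset (hn : 1 < n) (w : Fin n) {L : ℕ} (h2L : 2 * L ≤ n) :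
    ∃ p : (cycleGraph n).Walk w (w + L), IsGeodesic (cycleGraph n) p ∧
      arc w L ⊆ {e | e ∈ p.edges} := by
  obtain ⟨p, hp, hpL⟩ := exists_walk_arc_subset hn w L
  refine ⟨p, ?_, hpL⟩
  obtain ⟨q, hq⟩ := (cycleGraph_preconnected w (w + L)).exists_walk_length_eq_dist
  have hLq : L ≤ (displacement q).natAbs :=
    le_natAbs_of_intCast_eq h2L (by rw [intCast_displacement, add_sub_cancel_left])
  have := natAbs_displacement_le q
  exact le_antisymm (by omega) (dist_le p)

theorem ncard_inter_arc_le_two (hn : 1 < n) {S : Set (Sym2 (Fin n))}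
    (hS : IsEdgeGPSet (cycleGraph n) S) (w : Fin n) {L : ℕ} (h2L : 2 * L ≤ n) :
    (S ∩ arc w L).ncard ≤ 2 := by
  obtain ⟨p, hp, hpL⟩ := exists_isGeodesic_arc_subset hn w h2L
  exact (Set.ncard_le_ncard (Set.inter_subset_inter_right S hpL)).trans
    (hS.ncard_inter_edges_le_two p hp)

theorem ncard_le_four_of_isEdgeGPSet (hn : 6 ≤ n) {S : Set (Sym2 (Fin n))}
    (hS : IsEdgeGPSet (cycleGraph n) S) : S.ncard ≤ 4 := by
  by_cases hall : ∀ a, succEdge a ∈ S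
  · have h3 : arc 0 3 ⊆ S ∩ arc 0 3 := by
      rintro e ⟨i, hi, rfl⟩
      exact ⟨hall _, i, hi, rfl⟩
    have := (Set.ncard_le_ncard h3).trans (ncard_inter_arc_le_two (by omega) hS 0 (by omega))
    rw [ncard_arc (by omega) 0 (by omega)] at this
    omega
  · obtain ⟨a, ha⟩ := not_forall.mp hall
    have hcover : S ⊆ (S ∩ arc (a + 1) (n / 2)) ∪
        (S ∩ arc (a + ((1 + n / 2 : ℕ) : Fin n)) (n - 1 - n / 2)) := by
      intro e heS
      have he := edgeSet_subset_arc a (hS.1 heS)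
      rw [show arc a n = arc a (1 + n / 2 + (n - 1 - n / 2)) by congr 1; omega, arc_add, arc_add,
        arc_one, Nat.cast_one] at he
      rcases he with (rfl | he) | he
      · exact absurd heS ha
      · exact .inl ⟨heS, he⟩
      · exact .inr ⟨heS, he⟩
    calc S.ncard ≤ _ := Set.ncard_le_ncard hcover
      _ ≤ _ + _ := Set.ncard_union_le _ _
      _ ≤ 2 + 2 := add_le_add (ncard_inter_arc_le_two (by omega) hS _ (by omega))
          (ncard_inter_arc_le_two (by omega) hS _ (by omega))

def antipodalPair (c : Fin n) : Set (Sym2 (Fin n)) :=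
  {succEdge c, succEdge (c + ((n / 2 : ℕ) : Fin n))}

theorem antipodalPair_inter_arc_subsingleton (hn : 2 < n) (c w : Fin n) {L : ℕ}
    (h2L : 2 * L ≤ n) : (antipodalPair c ∩ arc w L).Subsingleton := by
  have h_half : ((n / 2 : ℕ) : Fin n).val = n / 2 := by
    rw [Fin.val_natCast, Nat.mod_eq_of_lt (by omega)]
  have key : succEdge c ∈ arc w L → succEdge (c + ((n / 2 : ℕ) : Fin n)) ∉ arc w L := by
    intro hc
    rw [succEdge_mem_arc_iff hn] at hc
    rw [succEdge_mem_arc_iff hn, add_sub_right_comm, Fin.val_add, h_half,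
      Nat.mod_eq_of_lt (by omega)]
    omega
  rintro x ⟨rfl | rfl, hx⟩ y ⟨rfl | rfl, hy⟩
  · rfl
  · exact absurd hy (key hx)
  · exact absurd hx (key hy)
  · rfl

theorem isEdgeGPSet_antipodalPair_union (hn : 2 < n) :
    IsEdgeGPSet (cycleGraph n) (antipodalPair (0 : Fin n) ∪ antipodalPair 1) := by
  refine isEdgeGPSet_of_ncard_inter_edges_le_two ?_ fun u v p hp => ?_
  · rintro e ((rfl | rfl) | (rfl | rfl)) <;> exact succEdge_mem_edgeSet (by omega) _
  obtain ⟨w, hw⟩ := exists_edges_subset_arc_of_isGeodesic hn hp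
  have h2L := two_mul_length_le_of_isGeodesic (by omega) hp
  calc _ ≤ ((antipodalPair 0 ∪ antipodalPair 1) ∩ arc w p.length).ncard :=
        Set.ncard_le_ncard (Set.inter_subset_inter_right _ hw)
    _ = ((antipodalPair 0 ∩ arc w p.length) ∪ (antipodalPair 1 ∩ arc w p.length)).ncard := by
        rw [Set.union_inter_distrib_right]
    _ ≤ _ + _ := Set.ncard_union_le _ _
    _ ≤ 1 + 1 := add_le_add
        (Set.ncard_le_one_iff_subsingleton.mpr (antipodalPair_inter_arc_subsingleton hn 0 w h2L))
        (Set.ncard_le_one_iff_subsingleton.mpr (antipodalPair_inter_arc_subsingleton hn 1 w h2L))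

theorem ncard_antipodalPair_union (hn : 4 ≤ n) :
    (antipodalPair (0 : Fin n) ∪ antipodalPair 1).ncard = 4 := by
  have h_image : antipodalPair (0 : Fin n) ∪ antipodalPair 1 =
      (fun i : ℕ => succEdge ((0 : Fin n) + (i : Fin n))) '' ({0, n / 2} ∪ {1, 1 + n / 2}) := by
    simp [antipodalPair, Set.image_union, Set.image_insert_eq]
  rw [h_image, ((injOn_succEdge_add_natCast (by omega) 0).mono ?_).ncard_image]
  · have h_disj : Disjoint ({0, n / 2} : Set ℕ) {1, 1 + n / 2} := by
      simp only [Set.disjoint_insert_left, Set.disjoint_singleton_left, Set.mem_insert_iff,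
        Set.mem_singleton_iff]
      omega
    rw [Set.ncard_union_eq h_disj, Set.ncard_pair (by omega), Set.ncard_pair (by omega)]
  · simp only [Set.union_subset_iff, Set.insert_subset_iff, Set.singleton_subset_iff, Set.mem_Iio]
    omega

end SimpleGraph.cycleGraph

/-- If `n ≥ 6`, then the edge general position number of the cycle `C_n` equals `4`. -/
theorem egp_cycleGraph_large (n : ℕ) (hn : 6 ≤ n) :
    IsGreatest
      {k : ℕ | ∃ S : Set (Sym2 (Fin n)), IsEdgeGPSet (cycleGraph n) S ∧ S.ncard = k}
      4 := by
  have : NeZero n := ⟨by omega⟩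
  refine ⟨⟨_, cycleGraph.isEdgeGPSet_antipodalPair_union (by omega),
    cycleGraph.ncard_antipodalPair_union (by omega)⟩, ?_⟩
  rintro k ⟨S, hS, rfl⟩
  exact cycleGraph.ncard_le_four_of_isEdgeGPSet hn hS
end

section
/- If G is a connected graph, then gp_e(G) ≤ 2 · ip_e(G), i.e., the edge general position number of G is at most twice the isometric path edge number of G. -/
open SimpleGraph

/-- An indexed family of `k` geodesics of `G` is an isometric path edge cover if every
edge of `G` lies on at least one of them. -/
def IsIsometricPathEdgeCover {V : Type*} (G : SimpleGraph V) (k : ℕ)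
    (u v : Fin k → V) (p : ∀ i, G.Walk (u i) (v i)) : Prop :=
  (∀ i, IsGeodesic G (p i)) ∧ ∀ e ∈ G.edgeSet, ∃ i, e ∈ (p i).edges

/-- If `G` is a connected graph, then `gp_e(G) ≤ 2 · ip_e(G)`: the cardinality of any edge
general position set is at most twice the number of geodesics in any isometric path edge
cover of `G`. -/
theorem egp_le_two_mul_ipe {V : Type*} [Fintype V] (G : SimpleGraph V) (hconn : G.Connected)
    (S : Set (Sym2 V)) (hS : IsEdgeGPSet G S)
    (k : ℕ) (u v : Fin k → V) (p : ∀ i, G.Walk (u i) (v i))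
    (hcover : IsIsometricPathEdgeCover G k u v p) :
    S.ncard ≤ 2 * k := by
  classical
  obtain ⟨hSE, hgp⟩ := hS
  obtain ⟨hgeo, hcov⟩ := hcover
  have hSfin : S.Finite := Set.toFinite S
  set T : Fin k → Finset (Sym2 V) :=
    fun i => hSfin.toFinset.filter (fun e => e ∈ (p i).edges) with hT
  have hsub : hSfin.toFinset ⊆ Finset.univ.biUnion T := by
    intro e he
    rw [Set.Finite.mem_toFinset] at he
    obtain ⟨i, hi⟩ := hcov e (hSE he)
    exact Finset.mem_biUnion.2 ⟨i, Finset.mem_univ i,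
      Finset.mem_filter.2 ⟨hSfin.mem_toFinset.2 he, hi⟩⟩
  have hTcard : ∀ i, (T i).card ≤ 2 := by
    intro i
    by_contra h
    push_neg at h
    obtain ⟨a, ha, b, hb, c, hc, hab, hac, hbc⟩ := Finset.two_lt_card.1 h
    simp only [hT, Finset.mem_filter, Set.Finite.mem_toFinset] at ha hb hc
    rcases hgp (p i) (hgeo i) a ha.1 b hb.1 c hc.1 ha.2 hb.2 hc.2 with h | h | h
    exacts [hab h, hac h, hbc h]
  calc S.ncard = hSfin.toFinset.card := Set.ncard_eq_toFinset_card S hSfin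
    _ ≤ (Finset.univ.biUnion T).card := Finset.card_le_card hsub
    _ ≤ ∑ i, (T i).card := Finset.card_biUnion_le
    _ ≤ ∑ _i : Fin k, 2 := Finset.sum_le_sum fun i _ => hTcard i
    _ = 2 * k := by simp [mul_comm]
end

section
/- If P is a geodesic in a connected graph G, then no two distinct edges of P are in the Djoković–Winkler relation Θ. -/
/-!
Index the vertices of the geodesic `P` as `v₀, …, vₙ`. Every subwalk of `P` is again a geodesic,
so `d(vᵢ, vⱼ) = |i - j|`. For two distinct edges `vᵢvᵢ₊₁` and `vⱼvⱼ₊₁` both sides of the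
Θ-equation then equal `2|i - j|`, whichever way round the edges are oriented.
-/

open SimpleGraph

lemma SimpleGraph.Walk.dist_getVert_le {V : Type*} {G : SimpleGraph V} {a b : V}
    (p : G.Walk a b) {i j : ℕ} (hij : i ≤ j) :
    G.dist (p.getVert i) (p.getVert j) ≤ j - i :=
  calc G.dist (p.getVert i) (p.getVert j)
      = G.dist (p.getVert i) ((p.drop i).getVert (j - i)) := by
        rw [Walk.drop_getVert, Nat.add_sub_cancel' hij]
    _ ≤ ((p.drop i).take (j - i)).length := dist_le _
    _ ≤ j - i := by simp [Walk.take_length]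

lemma IsGeodesic.dist_getVert {V : Type*} {G : SimpleGraph V} {a b : V} {p : G.Walk a b}
    (hp : IsGeodesic G p) {i j : ℕ} (hi : i ≤ p.length) (hj : j ≤ p.length) :
    G.dist (p.getVert i) (p.getVert j) = Nat.dist i j := by
  wlog hij : i ≤ j generalizing i j
  · rw [dist_comm, Nat.dist_comm]
    exact this hj hi (by omega)
  have hai : G.dist a (p.getVert i) ≤ i := by
    simpa using p.dist_getVert_le (Nat.zero_le i)
  have hjb : G.dist (p.getVert j) b ≤ p.length - j := by
    simpa using p.dist_getVert_le hj
  have hab : G.dist a b ≤ G.dist a (p.getVert i) + G.dist (p.getVert i) (p.getVert j) +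
      G.dist (p.getVert j) b := by
    have h₁ := (p.take i).reachable.dist_triangle_left b
    have h₂ := (p.drop j).reachable.dist_triangle_right (p.getVert i)
    omega
  have hle := p.dist_getVert_le hij
  unfold IsGeodesic at hp
  unfold Nat.dist
  omega

lemma IsGeodesic.dist_add_dist_getVert_succ {V : Type*} {G : SimpleGraph V} {a b : V}
    {p : G.Walk a b} (hp : IsGeodesic G p) {i j : ℕ} (hi : i < p.length) (hj : j < p.length)
    (hij : i ≠ j) :
    G.dist (p.getVert i) (p.getVert j) + G.dist (p.getVert (i + 1)) (p.getVert (j + 1)) =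
      G.dist (p.getVert i) (p.getVert (j + 1)) + G.dist (p.getVert (i + 1)) (p.getVert j) := by
  simp only [hp.dist_getVert, hi, hj, hi.le, hj.le, Nat.succ_le_of_lt, Nat.dist]
  omega

theorem geodesic_no_two_edges_dwRel_general {V : Type*} (G : SimpleGraph V)
    {a b : V} (p : G.Walk a b) (hp : IsGeodesic G p)
    (x y u v : V) (hxy : s(x, y) ∈ p.edges) (huv : s(u, v) ∈ p.edges)
    (hne : s(x, y) ≠ s(u, v)) :
    G.dist x u + G.dist y v = G.dist x v + G.dist y u := by
  obtain ⟨i, hi, hei⟩ := p.mk_mem_edges_iff_exists.mp hxy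
  obtain ⟨j, hj, hej⟩ := p.mk_mem_edges_iff_exists.mp huv
  have hij : i ≠ j := by
    rintro rfl
    exact hne (hei.symm.trans hej)
  have key := hp.dist_add_dist_getVert_succ hi hj hij
  rw [Sym2.eq_iff] at hei hej
  rcases hei with ⟨rfl, rfl⟩ | ⟨rfl, rfl⟩ <;> rcases hej with ⟨rfl, rfl⟩ | ⟨rfl, rfl⟩ <;> omega

/-- If `P` is a geodesic in a connected graph `G`, then no two distinct edges of `P` are in
the Djoković–Winkler relation `Θ`, i.e., any two distinct edges `s(x, y)` and `s(u, v)` of `P`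
satisfy `d(x,u) + d(y,v) = d(x,v) + d(y,u)`. -/
theorem geodesic_no_two_edges_dwRel {V : Type*} (G : SimpleGraph V) (hconn : G.Connected)
    {a b : V} (p : G.Walk a b) (hp : IsGeodesic G p)
    (x y u v : V) (hxy : s(x, y) ∈ p.edges) (huv : s(u, v) ∈ p.edges)
    (hne : s(x, y) ≠ s(u, v)) :
    G.dist x u + G.dist y v = G.dist x v + G.dist y u :=
  geodesic_no_two_edges_dwRel_general G p hp x y u v hxy huv hne
end

section
/- If r ≥ 2, then the edge general position number of the r-dimensional hypercube satisfies gp_e(Q_r) = 2^r. -/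
open SimpleGraph

/-- The `r`-dimensional hypercube: vertices are functions `Fin r → Bool`, two vertices
are adjacent iff they differ in exactly one coordinate. -/
def hypercube (r : ℕ) : SimpleGraph (Fin r → Bool) where
  Adj x y := ∃! i, x i ≠ y i
  symm := by
    constructor
    rintro x y ⟨i, hi, hu⟩
    exact ⟨i, hi.symm, fun j hj => hu j hj.symm⟩
  loopless := by
    constructor
    rintro x ⟨i, hi, -⟩
    exact hi rfl

/-!
Every geodesic of `Q_r` uses each coordinate direction at most once, since its length equals the
Hamming distance of its endpoints and each differing coordinate needs an edge. Hence the `2^r`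
edges in two fixed directions form an edge general position set. Conversely, for each vertex `x`
take the geodesic from `x` to its antipode flipping the coordinates in a fixed order; each edge
lies on two of these `2^r` geodesics and each geodesic carries at most two edges of a general
position set, so double counting gives `2 |S| ≤ 2 · 2^r`.
-/

open Finset

section EdgeGeneralPosition

variable {V : Type*} {G : SimpleGraph V}

theorem isEdgeGPSet_of_two_colors {κ : Type*} (c : Sym2 V → κ)
    (hc : ∀ ⦃u v : V⦄ (p : G.Walk u v), IsGeodesic G p → Set.InjOn c {e | e ∈ p.edges})
    {S : Set (Sym2 V)} (hSE : S ⊆ G.edgeSet) (a b : κ) (hS : ∀ e ∈ S, c e = a ∨ c e = b) :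
    IsEdgeGPSet G S := by
  refine ⟨hSE, fun u v p hp e₁ h₁ e₂ h₂ e₃ h₃ hp₁ hp₂ hp₃ => ?_⟩
  have hcol : c e₁ = c e₂ ∨ c e₁ = c e₃ ∨ c e₂ = c e₃ := by
    rcases hS e₁ h₁ with h₁ | h₁ <;> rcases hS e₂ h₂ with h₂ | h₂ <;>
      rcases hS e₃ h₃ with h₃ | h₃ <;> simp [h₁, h₂, h₃]
  have inj := hc p hp
  exact hcol.imp (inj hp₁ hp₂) (Or.imp (inj hp₁ hp₃) (inj hp₂ hp₃))

theorem IsEdgeGPSet.card_le_two {S : Set (Sym2 V)} (hS : IsEdgeGPSet G S) {u v : V}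
    {p : G.Walk u v} (hp : IsGeodesic G p) {T : Finset (Sym2 V)} (hTS : ↑T ⊆ S)
    (hTp : ∀ e ∈ T, e ∈ p.edges) : #T ≤ 2 := by
  by_contra! hT
  obtain ⟨e₁, h₁, e₂, h₂, e₃, h₃, h₁₂, h₁₃, h₂₃⟩ := two_lt_card.mp hT
  rcases hS.2 p hp e₁ (hTS h₁) e₂ (hTS h₂) e₃ (hTS h₃) (hTp e₁ h₁) (hTp e₂ h₂) (hTp e₃ h₃)
    with h | h | h <;> contradiction

theorem IsEdgeGPSet.ncard_mul_le_of_cover [DecidableEq V] {ι : Type*} [Fintype ι]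
    {S : Set (Sym2 V)} (hS : IsEdgeGPSet G S) (hfin : S.Finite) {u v : ι → V}
    (P : ∀ i, G.Walk (u i) (v i)) (hP : ∀ i, IsGeodesic G (P i)) {m : ℕ} (hm : ∀ e ∈ S, m ≤ #{i | e ∈ (P i).edges}) :
    S.ncard * m ≤ Fintype.card ι * 2 := by
  rw [Set.ncard_eq_toFinset_card S hfin, ← card_univ]
  refine card_mul_le_card_mul (fun e i => e ∈ (P i).edges) (fun e he => ?_) (fun i _ => ?_)
  · simpa [bipartiteAbove] using hm e (hfin.mem_toFinset.mp he)
  · exact hS.card_le_two (hP i) (fun e he => by simp_all [bipartiteBelow])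
      (by simp [bipartiteBelow])

end EdgeGeneralPosition

namespace Hypercube

variable {r : ℕ}

def flipAt (i : Fin r) (x : Fin r → Bool) : Fin r → Bool := Function.update x i (!x i)

@[simp] lemma flipAt_self (i : Fin r) (x : Fin r → Bool) : flipAt i x i = !x i :=
  Function.update_self ..

lemma flipAt_of_ne {i j : Fin r} (h : j ≠ i) (x : Fin r → Bool) : flipAt i x j = x j :=
  Function.update_of_ne h ..

@[simp] lemma flipAt_flipAt (i : Fin r) (x : Fin r → Bool) : flipAt i (flipAt i x) = x := by
  funext j
  by_cases h : j = i
  · subst h; simp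
  · rw [flipAt_of_ne h, flipAt_of_ne h]

lemma adj_flipAt (i : Fin r) (x : Fin r → Bool) : (hypercube r).Adj x (flipAt i x) :=
  ⟨i, by simp, fun j hj => by_contra fun h => hj (flipAt_of_ne h x).symm⟩

lemma exists_eq_flipAt_of_mem_edgeSet {e : Sym2 (Fin r → Bool)}
    (he : e ∈ (hypercube r).edgeSet) : ∃ x i, e = s(x, flipAt i x) := by
  induction e using Sym2.ind with
  | h x y =>
    obtain ⟨i, hi, huniq⟩ := he
    refine ⟨x, i, congrArg (s(x, ·)) (funext fun j => ?_)⟩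
    by_cases h : j = i
    · subst h
      simpa using (Bool.eq_not_of_ne hi.symm)
    · rw [flipAt_of_ne h]
      exact by_contra fun hne => h (huniq j (Ne.symm hne))

def edgeDir (e : Sym2 (Fin r → Bool)) : Finset (Fin r) :=
  Sym2.lift ⟨fun x y => {i | x i ≠ y i}, fun x y => by simp only [ne_comm]⟩ e

lemma edgeDir_mk (x y : Fin r → Bool) :
    edgeDir s(x, y) = ({i | x i ≠ y i} : Finset (Fin r)) := rfl

lemma edgeDir_flipAt (i : Fin r) (x : Fin r → Bool) : edgeDir s(x, flipAt i x) = {i} := by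
  ext j
  rw [edgeDir_mk, mem_filter, mem_singleton]
  by_cases h : j = i
  · subst h; simp
  · simp [flipAt_of_ne h, h]

lemma card_edgeDir {e : Sym2 (Fin r → Bool)} (he : e ∈ (hypercube r).edgeSet) :
    #(edgeDir e) = 1 := by
  obtain ⟨x, i, rfl⟩ := exists_eq_flipAt_of_mem_edgeSet he
  rw [edgeDir_flipAt, card_singleton]

lemma sum_countP_mem_edgeDir {u v : Fin r → Bool} (p : (hypercube r).Walk u v) :
    ∑ j, p.edges.countP (fun e => j ∈ edgeDir e) = p.length := by
  induction p with
  | nil => simp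
  | cons h q ih =>
    simp only [Walk.edges_cons, List.countP_cons, sum_add_distrib, ih, Walk.length_cons]
    rw [add_right_inj]
    simp only [decide_eq_true_eq, sum_boole, filter_mem_eq_inter, univ_inter]
    exact card_edgeDir ((hypercube r).mem_edgeSet.mpr h)

lemma countP_mem_edgeDir_pos {u v : Fin r → Bool} (p : (hypercube r).Walk u v) {j : Fin r}
    (h : u j ≠ v j) : 0 < p.edges.countP (fun e => j ∈ edgeDir e) := by
  obtain ⟨d, hd, hfst, hsnd⟩ := p.exists_boundary_dart {x | x j = u j} rfl (Ne.symm h)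
  refine List.countP_pos_iff.mpr ⟨d.edge, List.mem_map_of_mem hd, ?_⟩
  have hne : d.fst j ≠ d.snd j := hfst ▸ Ne.symm hsnd
  simpa [Dart.edge, edgeDir_mk] using hne

lemma hammingDist_le_length {u v : Fin r → Bool} (p : (hypercube r).Walk u v) :
    hammingDist u v ≤ p.length := by
  rw [← sum_countP_mem_edgeDir p, hammingDist, card_filter]
  gcongr with j
  split_ifs with h
  exacts [countP_mem_edgeDir_pos p h, Nat.zero_le _]

def flipAll (l : List (Fin r)) (x : Fin r → Bool) : Fin r → Bool :=
  l.foldl (fun y i => flipAt i y) x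

lemma flipAll_apply {l : List (Fin r)} (hl : l.Nodup) (x : Fin r → Bool) (j : Fin r) :
    flipAll l x j = if j ∈ l then !x j else x j := by
  induction l generalizing x with
  | nil => rfl
  | cons i l ih =>
    obtain ⟨hil, hl⟩ := List.nodup_cons.mp hl
    change flipAll l (flipAt i x) j = _
    rw [ih hl]
    by_cases hj : j = i
    · subst hj; simp [hil]
    · simp [flipAt_of_ne hj, hj]

lemma flipAll_flipAll {l : List (Fin r)} (hl : l.Nodup) (x : Fin r → Bool) :
    flipAll l (flipAll l x) = x := by
  funext j
  simp only [flipAll_apply hl]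
  split_ifs <;> simp

lemma hammingDist_flipAll {l : List (Fin r)} (hl : l.Nodup) (x : Fin r → Bool) :
    hammingDist x (flipAll l x) = l.length := by
  rw [← List.toFinset_card_of_nodup hl, hammingDist]
  congr 1
  ext j
  by_cases hj : j ∈ l <;> simp [flipAll_apply hl, hj]

def flipWalk (x : Fin r → Bool) : (l : List (Fin r)) → (hypercube r).Walk x (flipAll l x)
  | [] => .nil
  | i :: l => .cons (adj_flipAt i x) (flipWalk (flipAt i x) l)

@[simp] lemma length_flipWalk (x : Fin r → Bool) (l : List (Fin r)) :
    (flipWalk x l).length = l.length := by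
  induction l generalizing x with
  | nil => rfl
  | cons i l ih => exact congrArg Nat.succ (ih (flipAt i x))

lemma mem_edges_flipWalk (x : Fin r → Bool) (l₁ l₂ : List (Fin r)) (i : Fin r) :
    s(flipAll l₁ x, flipAt i (flipAll l₁ x)) ∈ (flipWalk x (l₁ ++ i :: l₂)).edges := by
  induction l₁ generalizing x with
  | nil => exact List.mem_cons_self
  | cons j l₁ ih => exact List.mem_cons_of_mem _ (ih (flipAt j x))

theorem dist_eq_hammingDist (u v : Fin r → Bool) :
    (hypercube r).dist u v = hammingDist u v := by
  set l := ({i | u i ≠ v i} : Finset (Fin r)).toList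
  have hl : l.Nodup := nodup_toList _
  have hv : flipAll l u = v := by
    funext j
    rw [flipAll_apply hl]
    by_cases hj : u j = v j
    · simp [l, hj]
    · simpa [l, hj] using Bool.eq_not_of_ne hj
  refine le_antisymm ?_ ?_
  · calc (hypercube r).dist u v ≤ (flipWalk u l).length := hv ▸ dist_le (flipWalk u l)
      _ = hammingDist u v := by rw [length_flipWalk, ← hammingDist_flipAll hl, hv]
  · have hreach : (hypercube r).Reachable u v := ⟨hv ▸ flipWalk u l⟩
    obtain ⟨p, hp⟩ := hreach.exists_walk_length_eq_dist
    exact hp ▸ hammingDist_le_length p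

lemma isGeodesic_flipWalk {l : List (Fin r)} (hl : l.Nodup) (x : Fin r → Bool) :
    IsGeodesic (hypercube r) (flipWalk x l) := by
  rw [IsGeodesic, dist_eq_hammingDist, hammingDist_flipAll hl, length_flipWalk]

theorem injOn_edgeDir_edges {u v : Fin r → Bool} {p : (hypercube r).Walk u v}
    (hp : IsGeodesic (hypercube r) p) : Set.InjOn edgeDir {e | e ∈ p.edges} := by
  intro e₁ h₁ e₂ h₂ hdir
  by_contra hne
  obtain ⟨j, hj⟩ := card_eq_one.mp (card_edgeDir (p.edges_subset_edgeSet h₁))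
  have htwo : 2 ≤ p.edges.countP (fun e => j ∈ edgeDir e) := by
    rw [List.countP_eq_length_filter]
    refine (List.Nodup.subperm (l₁ := [e₁, e₂]) (by simpa using hne) ?_).length_le
    simpa [← hdir, hj] using And.intro h₁ h₂
  have hlt : hammingDist u v < p.length := by
    rw [← sum_countP_mem_edgeDir p, hammingDist, card_filter]
    refine sum_lt_sum (fun i _ => ?_) ⟨j, mem_univ j, ?_⟩
    · split_ifs with h
      exacts [countP_mem_edgeDir_pos p h, Nat.zero_le _]
    · split_ifs <;> omega
  exact hlt.ne (hp.trans (dist_eq_hammingDist u v)).symm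

-- In each 4-cycle spanned by the directions `i₀, i₁`, `pairEdge` matches the four vertices with
-- the four edges.
def pairDir (i₀ i₁ : Fin r) (x : Fin r → Bool) : Fin r := if x i₀ = x i₁ then i₀ else i₁

def pairEdge (i₀ i₁ : Fin r) (x : Fin r → Bool) : Sym2 (Fin r → Bool) :=
  s(x, flipAt (pairDir i₀ i₁ x) x)

variable {i₀ i₁ : Fin r}

lemma pairDir_flipAt_pairDir (h : i₀ ≠ i₁) (x : Fin r → Bool) :
    pairDir i₀ i₁ (flipAt (pairDir i₀ i₁ x) x) ≠ pairDir i₀ i₁ x := by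
  unfold pairDir
  by_cases hx : x i₀ = x i₁
  · simp [hx, flipAt_of_ne h.symm, h.symm]
  · simp [hx, flipAt_of_ne h, h]

lemma pairEdge_injective (h : i₀ ≠ i₁) : Function.Injective (pairEdge i₀ i₁) := by
  intro x y hxy
  have hdir : pairDir i₀ i₁ x = pairDir i₀ i₁ y := by
    simpa [pairEdge, edgeDir_flipAt] using congrArg edgeDir hxy
  rcases Sym2.eq_iff.mp hxy with ⟨rfl, -⟩ | ⟨hx, -⟩
  · rfl
  · refine absurd ?_ (pairDir_flipAt_pairDir h y)
    rw [← hx, hdir]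

lemma isEdgeGPSet_range_pairEdge :
    IsEdgeGPSet (hypercube r) (Set.range (pairEdge i₀ i₁)) := by
  refine isEdgeGPSet_of_two_colors edgeDir (fun _ _ _ hp => injOn_edgeDir_edges hp) ?_
    {i₀} {i₁} ?_
  · rintro _ ⟨x, rfl⟩
    exact adj_flipAt _ x
  · rintro _ ⟨x, rfl⟩
    rw [pairEdge, edgeDir_flipAt, pairDir]
    split_ifs <;> simp

lemma ncard_range_pairEdge (h : i₀ ≠ i₁) : (Set.range (pairEdge i₀ i₁)).ncard = 2 ^ r := by
  rw [← Set.image_univ, Set.ncard_image_of_injective _ (pairEdge_injective h), Set.ncard_univ]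
  simp

lemma two_le_card_flipWalk_edges {e : Sym2 (Fin r → Bool)} (he : e ∈ (hypercube r).edgeSet) :
    2 ≤ #{x | e ∈ (flipWalk x (univ : Finset (Fin r)).toList).edges} := by
  obtain ⟨y, i, rfl⟩ := exists_eq_flipAt_of_mem_edgeSet he
  obtain ⟨l₁, l₂, hsplit⟩ := List.append_of_mem (mem_toList.mpr (mem_univ i))
  have hnodup := nodup_toList (univ : Finset (Fin r))
  rw [hsplit] at hnodup ⊢
  have hl₁ : l₁.Nodup := hnodup.sublist (List.sublist_append_left _ _)
  have hi : i ∉ l₁ := fun hi => List.disjoint_of_nodup_append hnodup hi List.mem_cons_self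
  refine one_lt_card.mpr ⟨flipAll l₁ y, ?_, flipAll l₁ (flipAt i y), ?_, fun heq => ?_⟩
  · simpa [flipAll_flipAll hl₁] using mem_edges_flipWalk (flipAll l₁ y) l₁ l₂ i
  · simpa [flipAll_flipAll hl₁, Sym2.eq_swap] using
      mem_edges_flipWalk (flipAll l₁ (flipAt i y)) l₁ l₂ i
  · simpa [flipAll_apply hl₁, hi] using congrFun heq i

theorem ncard_le_of_isEdgeGPSet {S : Set (Sym2 (Fin r → Bool))}
    (hS : IsEdgeGPSet (hypercube r) S) : S.ncard ≤ 2 ^ r := by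
  have := hS.ncard_mul_le_of_cover S.toFinite
    (fun x => flipWalk x (univ : Finset (Fin r)).toList)
    (fun x => isGeodesic_flipWalk (nodup_toList _) x)
    (fun e he => two_le_card_flipWalk_edges (hS.1 he))
  simp only [Fintype.card_fun, Fintype.card_bool, Fintype.card_fin] at this
  omega

end Hypercube

/-- If `r ≥ 2`, then the edge general position number of the `r`-dimensional hypercube `Q_r`
equals `2^r`. -/
theorem egp_hypercube (r : ℕ) (hr : 2 ≤ r) :
    IsGreatest
      {k : ℕ | ∃ S : Set (Sym2 (Fin r → Bool)), IsEdgeGPSet (hypercube r) S ∧ S.ncard = k}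
      (2 ^ r) := by
  have h01 : (⟨0, by omega⟩ : Fin r) ≠ ⟨1, by omega⟩ := by simp
  refine ⟨⟨_, Hypercube.isEdgeGPSet_range_pairEdge, Hypercube.ncard_range_pairEdge h01⟩, ?_⟩
  rintro k ⟨S, hS, rfl⟩
  exact Hypercube.ncard_le_of_isEdgeGPSet hS
end

section
/- Let r ≥ 2 and let i ≠ j be two coordinates in {1,…,r}. Then the set of all edges of the r-dimensional hypercube Q_r whose endpoints differ in coordinate i, together with the set of all edges whose endpoints differ in coordinate j, is an edge general position set of Q_r of cardinality 2^r. -/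
open SimpleGraph

/-!
Every step of a walk in `Q_r` flips exactly one coordinate, and a coordinate in which the
endpoints differ is flipped at least once. Flipping the differing coordinates one by one gives a
walk of length the Hamming distance, so a geodesic flips every coordinate at most once: it meets
each direction class of edges at most once, hence the union of two classes at most twice. A
direction class consists of the `2 ^ (r - 1)` edges `{x, x + e_c}` with `x c = false`, and two
distinct classes are disjoint.
-/

section Changes

variable {V β : Type*} [DecidableEq β]

def Sym2.changes (f : V → β) : Sym2 V → Bool :=
  Sym2.lift ⟨fun x y ↦ f x != f y, fun _ _ ↦ bne_comm⟩

@[simp]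
lemma Sym2.changes_mk (f : V → β) (x y : V) : Sym2.changes f s(x, y) = (f x != f y) := rfl

lemma SimpleGraph.Walk.countP_edges_changes_pos {G : SimpleGraph V} {u v : V} (p : G.Walk u v)
    (f : V → β) (h : f u ≠ f v) : 0 < p.edges.countP (Sym2.changes f) := by
  obtain ⟨d, hd, hfst, hsnd⟩ := p.exists_boundary_dart {x | f x = f u} rfl (Ne.symm h)
  refine List.countP_pos_iff.mpr ⟨d.edge, p.edges_eq_map_darts ▸ List.mem_map_of_mem hd, ?_⟩
  simp only [Set.mem_ofPred_eq] at hfst hsnd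
  simp [Dart.edge, hfst, Ne.symm hsnd]

end Changes

lemma List.eq_of_mem_of_countP_le_one {α : Type*} [DecidableEq α] {l : List α} {p : α → Bool}
    (h : l.countP p ≤ 1) {a b : α} (ha : a ∈ l) (hb : b ∈ l) (hpa : p a) (hpb : p b) :
    a = b := by
  have hcard : (l.filter p).toFinset.card ≤ 1 :=
    (List.toFinset_card_le _).trans (List.countP_eq_length_filter ▸ h)
  exact Finset.card_le_one.mp hcard a (by simp [ha, hpa]) b (by simp [hb, hpb])

lemma isEdgeGPSet_union {V : Type*} {G : SimpleGraph V} {S T : Set (Sym2 V)}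
    (hS : S ⊆ G.edgeSet) (hT : T ⊆ G.edgeSet)
    (hS₁ : ∀ ⦃u v⦄ (p : G.Walk u v), IsGeodesic G p → {e ∈ S | e ∈ p.edges}.Subsingleton)
    (hT₁ : ∀ ⦃u v⦄ (p : G.Walk u v), IsGeodesic G p → {e ∈ T | e ∈ p.edges}.Subsingleton) :
    IsEdgeGPSet G (S ∪ T) := by
  refine ⟨Set.union_subset hS hT, fun u v p hp e₁ h₁ e₂ h₂ e₃ h₃ m₁ m₂ m₃ ↦ ?_⟩
  have hS' := hS₁ p hp
  have hT' := hT₁ p hp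
  rcases h₁ with h₁ | h₁ <;> rcases h₂ with h₂ | h₂ <;> rcases h₃ with h₃ | h₃ <;>
  first
  | exact .inl (hS' ⟨h₁, m₁⟩ ⟨h₂, m₂⟩)
  | exact .inl (hT' ⟨h₁, m₁⟩ ⟨h₂, m₂⟩)
  | exact .inr (.inl (hS' ⟨h₁, m₁⟩ ⟨h₃, m₃⟩))
  | exact .inr (.inl (hT' ⟨h₁, m₁⟩ ⟨h₃, m₃⟩))
  | exact .inr (.inr (hS' ⟨h₂, m₂⟩ ⟨h₃, m₃⟩))
  | exact .inr (.inr (hT' ⟨h₂, m₂⟩ ⟨h₃, m₃⟩))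

section Hypercube

variable {r : ℕ}

lemma hypercube_adj_update {x : Fin r → Bool} {c : Fin r} {b : Bool} (h : x c ≠ b) :
    (hypercube r).Adj x (Function.update x c b) :=
  ⟨c, by simpa using h, fun d hd ↦ by_contra fun hdc ↦ hd (by simp [hdc])⟩

lemma hypercube_eq_update_of_adj {x y : Fin r → Bool} {c : Fin r} (hxy : (hypercube r).Adj x y)
    (hc : x c ≠ y c) : y = Function.update x c (y c) := by
  obtain ⟨c', -, huniq⟩ := hxy
  funext d
  obtain rfl | hdc := eq_or_ne d c
  · simp
  · rw [Function.update_of_ne hdc]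
    by_contra hne
    exact hdc ((huniq d (Ne.symm hne)).trans (huniq c hc).symm)

lemma hammingDist_eq_one_of_hypercube_adj {x y : Fin r → Bool} (hxy : (hypercube r).Adj x y) :
    hammingDist x y = 1 := by
  obtain ⟨c, hc, huniq⟩ := hxy
  exact Finset.card_eq_one.mpr ⟨c, Finset.eq_singleton_iff_unique_mem.mpr
    ⟨by simpa using hc, fun d hd ↦ huniq d (by simpa using hd)⟩⟩

lemma hammingDist_update_add_one {u v : Fin r → Bool} {c : Fin r} (hc : u c ≠ v c) :
    hammingDist (Function.update u c (v c)) v + 1 = hammingDist u v := by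
  have hfilter : Finset.univ.filter (fun d ↦ u d ≠ v d) =
      insert c (Finset.univ.filter fun d ↦ Function.update u c (v c) d ≠ v d) := by
    ext d
    obtain rfl | hdc := eq_or_ne d c <;> simp [*]
  unfold hammingDist
  rw [hfilter, Finset.card_insert_of_notMem (by simp)]

lemma hypercube_exists_walk_length_eq_hammingDist (u v : Fin r → Bool) :
    ∃ p : (hypercube r).Walk u v, p.length = hammingDist u v := by
  induction h : hammingDist u v generalizing u with
  | zero =>
    obtain rfl := hammingDist_eq_zero.mp h
    exact ⟨.nil, rfl⟩
  | succ n ih =>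
    have huv : u ≠ v := hammingDist_pos.mp (by omega)
    obtain ⟨c, hc⟩ := Function.ne_iff.mp huv
    have hdist := hammingDist_update_add_one hc
    obtain ⟨q, hq⟩ := ih (Function.update u c (v c)) (by omega)
    exact ⟨.cons (hypercube_adj_update hc) q, by simp [hq]⟩

lemma hypercube_sum_countP_edges_changes_eq_length {u v : Fin r → Bool}
    (p : (hypercube r).Walk u v) :
    ∑ c, p.edges.countP (Sym2.changes (· c)) = p.length := by
  induction p with
  | nil => simp
  | @cons x y w hxy q ih =>
    have hxy' : ∑ c, (if Sym2.changes (· c) s(x, y) then 1 else 0) = 1 :=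
      calc _ = hammingDist x y := by
            simp only [hammingDist, Finset.card_filter, Sym2.changes_mk, bne_iff_ne]
        _ = 1 := hammingDist_eq_one_of_hypercube_adj hxy
    rw [Walk.edges_cons, Walk.length_cons, ← ih, ← hxy', ← Finset.sum_add_distrib]
    simp only [List.countP_cons]

lemma hypercube_countP_edges_changes_le_one_of_isGeodesic {u v : Fin r → Bool}
    {p : (hypercube r).Walk u v} (hp : IsGeodesic (hypercube r) p) (c : Fin r) :
    p.edges.countP (Sym2.changes (· c)) ≤ 1 := by
  by_contra! hc
  have hlower (d : Fin r) :
      (if u d ≠ v d then 1 else 0) ≤ p.edges.countP (Sym2.changes (· d)) := by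
    split_ifs with hd
    · exact p.countP_edges_changes_pos _ hd
    · exact Nat.zero_le _
  have hlong : hammingDist u v < p.length :=
    calc hammingDist u v = ∑ d, (if u d ≠ v d then 1 else 0) := Finset.card_filter _ _
      _ < ∑ d, p.edges.countP (Sym2.changes (· d)) :=
          Finset.sum_lt_sum (fun d _ ↦ hlower d) ⟨c, Finset.mem_univ _, by split_ifs <;> omega⟩
      _ = p.length := hypercube_sum_countP_edges_changes_eq_length p
  obtain ⟨q, hq⟩ := hypercube_exists_walk_length_eq_hammingDist u v
  have hshort := hp ▸ (hypercube r).dist_le q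
  omega

lemma hypercube_eq_of_mem_edges_of_isGeodesic {u v : Fin r → Bool} {p : (hypercube r).Walk u v}
    (hp : IsGeodesic (hypercube r) p) {c : Fin r} {e f : Sym2 (Fin r → Bool)}
    (he : e ∈ p.edges) (hf : f ∈ p.edges)
    (hec : Sym2.changes (· c) e) (hfc : Sym2.changes (· c) f) : e = f :=
  List.eq_of_mem_of_countP_le_one (hypercube_countP_edges_changes_le_one_of_isGeodesic hp c)
    he hf hec hfc

def hypercubeEdgeClass (r : ℕ) (c : Fin r) : Set (Sym2 (Fin r → Bool)) :=
  {e | ∃ x y : Fin r → Bool, e = s(x, y) ∧ (hypercube r).Adj x y ∧ x c ≠ y c}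

lemma hypercubeEdgeClass_subset_edgeSet (c : Fin r) :
    hypercubeEdgeClass r c ⊆ (hypercube r).edgeSet := by
  rintro _ ⟨x, y, rfl, hxy, -⟩
  exact hxy

lemma changes_of_mem_hypercubeEdgeClass {c : Fin r} {e : Sym2 (Fin r → Bool)}
    (he : e ∈ hypercubeEdgeClass r c) : Sym2.changes (· c) e := by
  obtain ⟨x, y, rfl, -, hc⟩ := he
  simpa using hc

lemma hypercubeEdgeClass_subsingleton_of_isGeodesic (c : Fin r) {u v : Fin r → Bool}
    {p : (hypercube r).Walk u v} (hp : IsGeodesic (hypercube r) p) :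
    {e ∈ hypercubeEdgeClass r c | e ∈ p.edges}.Subsingleton := fun _ he _ hf ↦
  hypercube_eq_of_mem_edges_of_isGeodesic hp he.2 hf.2
    (changes_of_mem_hypercubeEdgeClass he.1) (changes_of_mem_hypercubeEdgeClass hf.1)

lemma disjoint_hypercubeEdgeClass {i j : Fin r} (hij : i ≠ j) :
    Disjoint (hypercubeEdgeClass r i) (hypercubeEdgeClass r j) := by
  rw [Set.disjoint_left]
  rintro _ ⟨x, y, rfl, ⟨c, -, huniq⟩, hi⟩ hj
  have hj' : x j ≠ y j := by simpa using changes_of_mem_hypercubeEdgeClass hj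
  exact hij ((huniq i hi).trans (huniq j hj').symm)

lemma hypercubeEdgeClass_eq_image (c : Fin r) :
    hypercubeEdgeClass r c =
      (fun x : Fin r → Bool ↦ s(x, Function.update x c true)) '' {x | x c = false} := by
  ext e
  constructor
  · rintro ⟨x, y, rfl, hxy, hc⟩
    cases hx : x c
    · have hy : y c = true := by simpa [hx] using hc.symm
      exact ⟨x, hx, by rw [hypercube_eq_update_of_adj hxy hc, hy]⟩
    · have hy : y c = false := by simpa [hx] using hc.symm
      refine ⟨y, hy, ?_⟩
      rw [Sym2.eq_swap, hypercube_eq_update_of_adj hxy.symm (Ne.symm hc), hx]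
  · rintro ⟨x, (hx : x c = false), rfl⟩
    exact ⟨x, _, rfl, hypercube_adj_update (by simp [hx]), by simp [hx]⟩

lemma ncard_hypercubeEdgeClass (c : Fin r) : (hypercubeEdgeClass r c).ncard = 2 ^ (r - 1) := by
  have hinj : Set.InjOn (fun x : Fin r → Bool ↦ s(x, Function.update x c true))
      {x | x c = false} := by
    intro x (hx : x c = false) y _ hxy
    rcases Sym2.eq_iff.mp hxy with ⟨h, -⟩ | ⟨h, -⟩
    · exact h
    · exact absurd (congrFun h c) (by simp [hx])
  have hhalf : {x : Fin r → Bool | x c = false}.ncard = 2 ^ (r - 1) := by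
    have := Fintype.card_filter_piFinset_const_eq_of_mem Finset.univ c (Finset.mem_univ false)
    rwa [Fintype.piFinset_univ, Finset.card_univ, Fintype.card_bool, Fintype.card_fin,
      ← Set.toFinset_ofPred, ← Set.ncard_eq_toFinset_card'] at this
  rw [hypercubeEdgeClass_eq_image, hinj.ncard_image, hhalf]

end Hypercube

theorem hypercube_two_coord_classes_general (r : ℕ) (i j : Fin r) (hij : i ≠ j) :
    IsEdgeGPSet (hypercube r)
      ({e | ∃ x y : Fin r → Bool, e = s(x, y) ∧ (hypercube r).Adj x y ∧ x i ≠ y i} ∪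
       {e | ∃ x y : Fin r → Bool, e = s(x, y) ∧ (hypercube r).Adj x y ∧ x j ≠ y j}) ∧
    ({e | ∃ x y : Fin r → Bool, e = s(x, y) ∧ (hypercube r).Adj x y ∧ x i ≠ y i} ∪
     {e | ∃ x y : Fin r → Bool, e = s(x, y) ∧ (hypercube r).Adj x y ∧ x j ≠ y j} :
       Set (Sym2 (Fin r → Bool))).ncard = 2 ^ r := by
  change IsEdgeGPSet _ (hypercubeEdgeClass r i ∪ hypercubeEdgeClass r j) ∧
    (hypercubeEdgeClass r i ∪ hypercubeEdgeClass r j).ncard = 2 ^ r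
  refine ⟨isEdgeGPSet_union (hypercubeEdgeClass_subset_edgeSet i)
    (hypercubeEdgeClass_subset_edgeSet j)
    (fun _ _ _ ↦ hypercubeEdgeClass_subsingleton_of_isGeodesic i)
    (fun _ _ _ ↦ hypercubeEdgeClass_subsingleton_of_isGeodesic j), ?_⟩
  rw [Set.ncard_union_eq (disjoint_hypercubeEdgeClass hij), ncard_hypercubeEdgeClass,
    ncard_hypercubeEdgeClass, ← two_mul, ← pow_succ', Nat.sub_add_cancel i.pos]

/-- For `r ≥ 2` and distinct coordinates `i ≠ j`, the set of edges of `Q_r` whose endpoints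
differ in coordinate `i`, together with those whose endpoints differ in coordinate `j`,
is an edge general position set of `Q_r` of cardinality `2^r`. -/
theorem hypercube_two_coord_classes (r : ℕ) (hr : 2 ≤ r) (i j : Fin r) (hij : i ≠ j) :
    IsEdgeGPSet (hypercube r)
      ({e | ∃ x y : Fin r → Bool, e = s(x, y) ∧ (hypercube r).Adj x y ∧ x i ≠ y i} ∪
       {e | ∃ x y : Fin r → Bool, e = s(x, y) ∧ (hypercube r).Adj x y ∧ x j ≠ y j}) ∧
    ({e | ∃ x y : Fin r → Bool, e = s(x, y) ∧ (hypercube r).Adj x y ∧ x i ≠ y i} ∪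
     {e | ∃ x y : Fin r → Bool, e = s(x, y) ∧ (hypercube r).Adj x y ∧ x j ≠ y j} :
       Set (Sym2 (Fin r → Bool))).ncard = 2 ^ r :=
  hypercube_two_coord_classes_general r i j hij
end

section
/- If T is a tree (a connected acyclic graph) and L is the set of pendant edges of T, then gp_e(T) = |L|, i.e., the edge general position number of T equals the number of its pendant edges. -/
/-!
Pendant edges: a vertex of degree one can only be an end of a trail, and two distinct pendant
edges have distinct leaves, so a geodesic carries at most two pendant edges.

Conversely, let `S` be an edge general position set of the tree. For `e ∈ S`, the two sides of
`e` cannot both contain edges of `S`: a geodesic between them would pass through three edges of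
`S`. So one side of `e` is free of the other edges of `S`; taking a vertex of it farthest from
`e` gives a leaf there, hence a pendant edge on that side (possibly `e` itself). Distinct edges
of `S` have disjoint free sides, so this assigns distinct pendant edges to them.
-/

open SimpleGraph

/-- The set of pendant edges of `G`: edges having an endpoint of degree one. -/
def pendantEdges {V : Type*} [Fintype V] (G : SimpleGraph V) [DecidableRel G.Adj] :
    Set (Sym2 V) :=
  {e ∈ G.edgeSet | ∃ v ∈ e, G.degree v = 1}

namespace SimpleGraph

variable {V : Type*} {G : SimpleGraph V} {u v a b x y : V}

lemma eq_of_degree_eq_one [Fintype V] [DecidableRel G.Adj] {w : V} (hw : G.degree w = 1)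
    {e f : Sym2 V} (he : e ∈ G.edgeSet) (hf : f ∈ G.edgeSet) (hwe : w ∈ e) (hwf : w ∈ f) :
    e = f := by
  classical
  have hcard : (G.incidenceFinset w).card ≤ 1 := by
    rw [G.card_incidenceFinset_eq_degree (v := w), hw]
  refine Finset.card_le_one.mp hcard e ?_ f ?_ <;> simp [mem_incidenceFinset, incidenceSet, *]

-- A vertex of degree one lies on exactly one edge of the trail, an odd number, so by the parity
-- count of `IsTrail.even_countP_edges_iff` it is an end of the trail.
lemma Walk.IsTrail.eq_or_eq_of_degree_eq_one [Fintype V] [DecidableRel G.Adj] {w : V}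
    {p : G.Walk u v} (hp : p.IsTrail) (hw : G.degree w = 1) {e : Sym2 V} (he : e ∈ p.edges)
    (hwe : w ∈ e) : w = u ∨ w = v := by
  classical
  have hpos : 0 < p.edges.countP (w ∈ ·) :=
    List.countP_pos_iff.mpr ⟨e, he, by simpa using hwe⟩
  have hle : p.edges.countP (w ∈ ·) ≤ 1 := by
    rw [← hw, ← G.card_incidenceFinset_eq_degree (v := w), List.countP_eq_length_filter,
      ← List.toFinset_card_of_nodup (hp.edges_nodup.filter _)]
    refine Finset.card_le_card fun f hf => ?_
    simp only [List.mem_toFinset, List.mem_filter, decide_eq_true_eq] at hf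
    simpa [mem_incidenceFinset, incidenceSet] using ⟨p.edges_subset_edgeSet hf.1, hf.2⟩
  have hone : p.edges.countP (w ∈ ·) = 1 := by omega
  have hodd := (hp.even_countP_edges_iff w).not.mp (by rw [hone]; decide)
  tauto

/-- The side of `v` (not of `u`) of the edge `uv`: the vertices still joined to `v` once `uv` is
deleted. -/
def side (G : SimpleGraph V) (u v : V) : Set V :=
  {x | (G.deleteEdges {s(u, v)}).Reachable x v}

lemma mem_side_self (u v : V) : v ∈ G.side u v := Reachable.refl _

lemma mem_side_swap_iff : x ∈ G.side v u ↔ (G.deleteEdges {s(u, v)}).Reachable x u := by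
  show (G.deleteEdges {s(v, u)}).Reachable x u ↔ _
  rw [Sym2.eq_swap]

lemma mem_side_of_adj (hab : G.Adj a b) (hne : s(a, b) ≠ s(u, v)) (ha : a ∈ G.side u v) :
    b ∈ G.side u v :=
  (Adj.reachable (deleteEdges_adj.mpr ⟨hab.symm, by simpa [Sym2.eq_swap] using hne⟩)).trans ha

lemma mem_side_or (hG : G.Connected) (u v x : V) : x ∈ G.side v u ∨ x ∈ G.side u v := by
  obtain ⟨p⟩ := hG.preconnected x u
  induction p with
  | nil => exact Or.inl (mem_side_self _ _)
  | @cons a b w hab p ih =>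
    by_cases he : s(a, b) = s(w, v)
    · rcases Sym2.eq_iff.mp he with ⟨rfl, -⟩ | ⟨rfl, -⟩
      · exact Or.inl (mem_side_self _ _)
      · exact Or.inr (mem_side_self _ _)
    · refine ih.imp (mem_side_of_adj hab.symm ?_) (mem_side_of_adj hab.symm ?_) <;>
        simpa [Sym2.eq_swap] using he

lemma not_mem_side_of_mem_side (hG : G.IsAcyclic) (h : G.Adj u v) (hx : x ∈ G.side v u) :
    x ∉ G.side u v := fun hx' =>
  isBridge_iff.mp (isAcyclic_iff_forall_adj_isBridge.mp hG h)
    ((mem_side_swap_iff.mp hx).symm.trans hx')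

lemma edge_subset_side_or (hG : G.Connected) {f : Sym2 V} (hf : f ∈ G.edgeSet)
    (hne : f ≠ s(u, v)) : (∀ z ∈ f, z ∈ G.side v u) ∨ ∀ z ∈ f, z ∈ G.side u v := by
  induction f using Sym2.ind with | _ a b => ?_
  have hab : G.Adj a b := hf
  have hne' : s(a, b) ≠ s(v, u) := by simpa [Sym2.eq_swap] using hne
  rcases mem_side_or hG u v a with ha | ha
  · refine Or.inl fun z hz => ?_
    rcases Sym2.mem_iff.mp hz with rfl | rfl
    exacts [ha, mem_side_of_adj hab hne' ha]
  · refine Or.inr fun z hz => ?_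
    rcases Sym2.mem_iff.mp hz with rfl | rfl
    exacts [ha, mem_side_of_adj hab hne ha]

lemma mem_edges_of_mem_side (hG : G.IsAcyclic) (h : G.Adj u v) (hx : x ∈ G.side v u)
    (hy : y ∈ G.side u v) (p : G.Walk x y) : s(u, v) ∈ p.edges := by
  by_contra hp
  exact not_mem_side_of_mem_side hG h hx
    ((reachable_deleteEdges_iff_exists_walk.mpr ⟨p, hp⟩).trans hy)

lemma reachable_deleteEdges_of_mem_side (hG : G.IsAcyclic) (h : G.Adj u v)
    (hx : x ∈ G.side u v) (ha : a ∈ G.side v u) (b : V) :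
    (G.deleteEdges {s(a, b)}).Reachable x v := by
  classical
  obtain ⟨p, hp⟩ := reachable_deleteEdges_iff_exists_walk.mp hx
  refine reachable_deleteEdges_iff_exists_walk.mpr ⟨p, fun hab => ?_⟩
  have hsupp := p.fst_mem_support_of_mem_edges hab
  refine not_mem_side_of_mem_side hG h ha
    (reachable_deleteEdges_iff_exists_walk.mpr ⟨p.dropUntil a hsupp, fun he => hp ?_⟩)
  exact p.edges_dropUntil_subset_edges hsupp he

lemma side_subset_side (hG : G.IsAcyclic) (h : G.Adj u v) (ha : a ∈ G.side v u)
    (hu : u ∈ G.side a b) (hne : s(a, b) ≠ s(u, v)) : G.side u v ⊆ G.side a b := by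
  intro y hy
  have hvu : (G.deleteEdges {s(a, b)}).Adj v u :=
    deleteEdges_adj.mpr ⟨h.symm, by simpa [Sym2.eq_swap, eq_comm] using hne⟩
  exact ((reachable_deleteEdges_of_mem_side hG h hy ha b).trans hvu.reachable).trans hu

lemma IsAcyclic.eq_of_adj_of_dist_lt (hG : G.IsAcyclic) {y₁ y₂ : V} (h₁ : G.Adj x y₁)
    (h₂ : G.Adj x y₂) (hd₁ : G.dist u y₁ < G.dist u x)
    (hd₂ : G.dist u y₂ < G.dist u x) : y₁ = y₂ := by
  have hu : G.Reachable u x := Reachable.of_dist_ne_zero (by omega)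
  have geodesic_through {y : V} (h : G.Adj x y) (hd : G.dist u y < G.dist u x) :
      ∃ p : G.Walk x u, p.IsPath ∧ p.snd = y := by
    obtain ⟨q, hq⟩ := (hu.trans h.reachable).symm.exists_walk_length_eq_dist
    have hlen : (Walk.cons h q).length = G.dist x u := by
      refine le_antisymm ?_ (G.dist_le _)
      rw [Walk.length_cons, hq, dist_comm (u := y), dist_comm (u := x)]
      omega
    exact ⟨_, Walk.isPath_of_length_eq_dist _ hlen, Walk.snd_cons _ _⟩
  obtain ⟨p₁, hp₁, rfl⟩ := geodesic_through h₁ hd₁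
  obtain ⟨p₂, hp₂, rfl⟩ := geodesic_through h₂ hd₂
  have hp : (⟨p₁, hp₁⟩ : G.Path x u) = ⟨p₂, hp₂⟩ := (hG.subsingleton_path x u).elim _ _
  rw [Subtype.mk.inj hp]

variable [Fintype V] [DecidableRel G.Adj]

-- A vertex of the side of `v` farthest from `u` has only one neighbour: its parent towards `u`.
lemma IsTree.exists_degree_eq_one_mem_side (hG : G.IsTree) (h : G.Adj u v) :
    ∃ ℓ ∈ G.side u v, G.degree ℓ = 1 := by
  obtain ⟨ℓ, hℓ, hmax⟩ :=
    Set.exists_max_image (G.side u v) (G.dist u) (Set.toFinite _) ⟨v, mem_side_self u v⟩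
  have hℓu : ℓ ≠ u := by
    rintro rfl
    exact not_mem_side_of_mem_side hG.isAcyclic h (mem_side_self v ℓ) hℓ
  have hcloser {y : V} (hy : G.Adj ℓ y) : G.dist u y < G.dist u ℓ := by
    by_cases he : s(ℓ, y) = s(u, v)
    · obtain ⟨rfl, rfl⟩ := (Sym2.eq_iff.mp he).resolve_left fun h' => hℓu h'.1
      simp [dist_eq_one_iff_adj.mpr hy.symm]
    · exact lt_of_le_of_ne (hmax y (mem_side_of_adj hy he hℓ)) (hG.dist_ne_of_adj u hy).symm
  obtain ⟨p⟩ := hG.connected.preconnected ℓ u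
  have hsnd : G.Adj ℓ p.snd := p.adj_snd (p.not_nil_of_ne hℓu)
  exact ⟨ℓ, hℓ, degree_eq_one_iff_existsUnique_adj.mpr ⟨p.snd, hsnd, fun y hy =>
    hG.isAcyclic.eq_of_adj_of_dist_lt hy hsnd (hcloser hy) (hcloser hsnd)⟩⟩

lemma IsTree.exists_mem_pendantEdges_side (hG : G.IsTree) (h : G.Adj u v) :
    ∃ f ∈ pendantEdges G, f = s(u, v) ∨ ∀ z ∈ f, z ∈ G.side u v := by
  obtain ⟨ℓ, hℓ, hdeg⟩ := hG.exists_degree_eq_one_mem_side h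
  obtain ⟨y, hy, -⟩ := degree_eq_one_iff_existsUnique_adj.mp hdeg
  refine ⟨s(ℓ, y), ⟨hy, ℓ, Sym2.mem_mk_left _ _, hdeg⟩,
    or_iff_not_imp_left.mpr fun hne z hz => ?_⟩
  rcases Sym2.mem_iff.mp hz with rfl | rfl
  exacts [hℓ, mem_side_of_adj hy hne hℓ]

end SimpleGraph

lemma pendantEdges_isEdgeGPSet {V : Type*} [Fintype V] (G : SimpleGraph V)
    [DecidableRel G.Adj] : IsEdgeGPSet G (pendantEdges G) := by
  refine ⟨Set.sep_subset _ _, fun u v p hp e₁ h₁ e₂ h₂ e₃ h₃ hp₁ hp₂ hp₃ => ?_⟩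
  have htrail : p.IsTrail := (p.isPath_of_length_eq_dist hp).isTrail
  obtain ⟨he₁, w₁, hw₁, hd₁⟩ := h₁
  obtain ⟨he₂, w₂, hw₂, hd₂⟩ := h₂
  obtain ⟨he₃, w₃, hw₃, hd₃⟩ := h₃
  have hend₁ := htrail.eq_or_eq_of_degree_eq_one hd₁ hp₁ hw₁
  have hend₂ := htrail.eq_or_eq_of_degree_eq_one hd₂ hp₂ hw₂
  have hend₃ := htrail.eq_or_eq_of_degree_eq_one hd₃ hp₃ hw₃
  have hpigeon : w₁ = w₂ ∨ w₁ = w₃ ∨ w₂ = w₃ := by grind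
  rcases hpigeon with rfl | rfl | rfl
  · exact Or.inl (eq_of_degree_eq_one hd₁ he₁ he₂ hw₁ hw₂)
  · exact Or.inr (Or.inl (eq_of_degree_eq_one hd₁ he₁ he₃ hw₁ hw₃))
  · exact Or.inr (Or.inr (eq_of_degree_eq_one hd₂ he₂ he₃ hw₂ hw₃))

namespace IsEdgeGPSet

variable {V : Type*} {G : SimpleGraph V} {S : Set (Sym2 V)} {u v : V}

-- Otherwise a geodesic from the far end of an edge on one side to the far end of an edge on
-- the other side would contain both of them and `uv`.
lemma not_exists_on_both_sides (hS : IsEdgeGPSet G S) (hG : G.IsTree) (he : s(u, v) ∈ S) :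
    ¬ ((∃ f ∈ S, ∀ z ∈ f, z ∈ G.side v u) ∧
      ∃ g ∈ S, ∀ z ∈ g, z ∈ G.side u v) := by
  rintro ⟨⟨f, hf, hfu⟩, g, hg, hgv⟩
  have huv : G.Adj u v := hS.1 he
  have separated {e : Sym2 V} (he : e ∈ S) (w : V) :
      ∃ a b, e = s(a, b) ∧ G.Adj a b ∧ w ∈ G.side a b := by
    induction e using Sym2.ind with | _ a b => ?_
    rcases mem_side_or hG.connected a b w with hw | hw
    exacts [⟨b, a, Sym2.eq_swap, (hS.1 he).symm, hw⟩, ⟨a, b, rfl, hS.1 he, hw⟩]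
  obtain ⟨x, x', rfl, hxx', hux⟩ := separated hf u
  obtain ⟨y, y', rfl, hyy', hvy⟩ := separated hg v
  have hx : x ∈ G.side v u := hfu x (Sym2.mem_mk_left _ _)
  have hy : y ∈ G.side u v := hgv y (Sym2.mem_mk_left _ _)
  have hfe : s(x, x') ≠ s(u, v) := fun h =>
    not_mem_side_of_mem_side hG.isAcyclic huv (hfu v (h ▸ Sym2.mem_mk_right _ _))
      (mem_side_self u v)
  have hge : s(y, y') ≠ s(v, u) := fun h =>
    not_mem_side_of_mem_side hG.isAcyclic huv.symm (hgv u (h ▸ Sym2.mem_mk_right _ _))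
      (mem_side_self v u)
  have hfg : s(x, x') ≠ s(y, y') := fun h =>
    not_mem_side_of_mem_side hG.isAcyclic huv hx (hgv x (h ▸ Sym2.mem_mk_left _ _))
  obtain ⟨P, hP⟩ := hG.connected.exists_walk_length_eq_dist x y
  have hPe : s(u, v) ∈ P.edges := mem_edges_of_mem_side hG.isAcyclic huv hx hy P
  have hPf : s(x, x') ∈ P.edges := mem_edges_of_mem_side hG.isAcyclic hxx' (mem_side_self x' x)
    (side_subset_side hG.isAcyclic huv hx hux hfe hy) P
  have hPg : s(y, y') ∈ P.edges := by
    rw [Sym2.eq_swap]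
    exact mem_edges_of_mem_side hG.isAcyclic hyy'.symm
      (side_subset_side hG.isAcyclic huv.symm hy hvy hge hx) (mem_side_self y' y) P
  rcases hS.2 P hP _ hf _ he _ hg hPf hPe hPg with h | h | h
  · exact hfe h
  · exact hfg h
  · exact hge (h.symm.trans Sym2.eq_swap)

lemma exists_free_side (hS : IsEdgeGPSet G S) (hG : G.IsTree) (he : s(u, v) ∈ S) :
    ∃ a b, s(a, b) = s(u, v) ∧
      ∀ g ∈ S, g ≠ s(u, v) → ∀ z ∈ g, z ∈ G.side b a := by
  have hsides {g : Sym2 V} (hg : g ∈ S) (hne : g ≠ s(u, v)) :=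
    edge_subset_side_or hG.connected (hS.1 hg) hne
  by_cases hv : ∃ g ∈ S, g ≠ s(u, v) ∧ ∀ z ∈ g, z ∈ G.side u v
  · obtain ⟨g', hg', -, hg'v⟩ := hv
    exact ⟨v, u, Sym2.eq_swap, fun g hg hne => (hsides hg hne).resolve_left fun hgu =>
      hS.not_exists_on_both_sides hG he ⟨⟨g, hg, hgu⟩, g', hg', hg'v⟩⟩
  · exact ⟨u, v, rfl, fun g hg hne => (hsides hg hne).resolve_right fun hgv =>
      hv ⟨g, hg, hne, hgv⟩⟩

lemma ncard_le_ncard_pendantEdges [Fintype V] [DecidableRel G.Adj] (hS : IsEdgeGPSet G S)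
    (hG : G.IsTree) : S.ncard ≤ (pendantEdges G).ncard := by
  classical
  let R (e f : Sym2 V) : Prop := ∃ u v, e = s(u, v) ∧
    (∀ g ∈ S, g ≠ e → ∀ z ∈ g, z ∈ G.side v u) ∧
    (f = e ∨ ∀ z ∈ f, z ∈ G.side u v)
  have hexists (e : Sym2 V) (he : e ∈ S) : ∃ f, f ∈ pendantEdges G ∧ R e f := by
    induction e using Sym2.ind with | _ u₀ v₀ => ?_
    obtain ⟨u, v, huv, hfree⟩ := hS.exists_free_side hG he
    rw [← huv] at he hfree ⊢
    obtain ⟨f, hf, hside⟩ := hG.exists_mem_pendantEdges_side (hS.1 he)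
    exact ⟨f, hf, u, v, rfl, hfree, hside⟩
  have hunique (f : Sym2 V) : ({e ∈ S | R e f} : Set (Sym2 V)).Subsingleton := by
    rintro e₁ ⟨he₁, u₁, v₁, rfl, hfree₁, hf₁⟩
      e₂ ⟨he₂, u₂, v₂, rfl, hfree₂, hf₂⟩
    by_contra hne
    have h₁ : G.Adj u₁ v₁ := hS.1 he₁
    have h₂ : G.Adj u₂ v₂ := hS.1 he₂
    have h₁₂ := hfree₁ _ he₂ (Ne.symm hne)
    have h₂₁ := hfree₂ _ he₁ hne
    rcases hf₁ with rfl | hf₁ <;> rcases hf₂ with h | hf₂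
    · exact hne h
    · exact not_mem_side_of_mem_side hG.isAcyclic h₂ (h₂₁ u₁ (Sym2.mem_mk_left _ _))
        (hf₂ u₁ (Sym2.mem_mk_left _ _))
    · subst h
      exact not_mem_side_of_mem_side hG.isAcyclic h₁ (h₁₂ u₂ (Sym2.mem_mk_left _ _))
        (hf₁ u₂ (Sym2.mem_mk_left _ _))
    · induction f using Sym2.ind with | _ z _ => ?_
      have hsub := side_subset_side hG.isAcyclic h₁ (h₁₂ v₂ (Sym2.mem_mk_right _ _))
        (h₂₁ u₁ (Sym2.mem_mk_left _ _)) (by rwa [Sym2.eq_swap, ne_comm])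
      exact not_mem_side_of_mem_side hG.isAcyclic h₂ (hsub (hf₁ z (Sym2.mem_mk_left _ _)))
        (hf₂ z (Sym2.mem_mk_left _ _))
  rw [Set.ncard_eq_toFinset_card' S, Set.ncard_eq_toFinset_card' (pendantEdges G)]
  exact Finset.card_le_card_of_forall_subsingleton R
    (fun e he => by simpa using hexists e (by simpa using he))
    (fun f _ => by simpa using hunique f)

end IsEdgeGPSet

/-- If `T` is a tree and `L` is its set of pendant edges, then `gp_e(T) = |L|`. -/
theorem egp_tree {V : Type*} [Fintype V] (G : SimpleGraph V) [DecidableRel G.Adj]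
    (hT : G.IsTree) :
    IsGreatest {n : ℕ | ∃ S : Set (Sym2 V), IsEdgeGPSet G S ∧ S.ncard = n}
      (pendantEdges G).ncard :=
  ⟨⟨pendantEdges G, pendantEdges_isEdgeGPSet G, rfl⟩,
    fun _ ⟨_, hS, hcard⟩ => hcard ▸ hS.ncard_le_ncard_pendantEdges hT⟩
end

section
/- If T is a tree (a connected acyclic graph), then the set of pendant edges of T is an edge general position set of T; that is, no geodesic of T contains three pendant edges. -/
open SimpleGraph

/-- An internal vertex of a path has two distinct neighbours. -/
lemma internal_two_neighbors {V : Type*} (G : SimpleGraph V) :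
    ∀ {u v w : V} (p : G.Walk u v), p.IsPath → w ∈ p.support → w ≠ u → w ≠ v →
      ∃ a b, a ≠ b ∧ G.Adj w a ∧ G.Adj w b := by
  intro u v w p
  induction p with
  | nil =>
    intro _ hw hu _
    simp only [SimpleGraph.Walk.support_nil, List.mem_singleton] at hw
    exact absurd hw hu
  | cons h q ih =>
    rename_i x y z
    intro hp hw hu hv
    simp only [SimpleGraph.Walk.support_cons, List.mem_cons] at hw
    rcases hw with rfl | hw
    · exact absurd rfl hu
    · by_cases hwy : w = y
      · subst hwy
        cases q with
        | nil => exact absurd rfl hv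
        | cons h' q' =>
          rename_i c
          refine ⟨x, c, ?_, h.symm, h'⟩
          intro hxc
          subst hxc
          have := hp.2
          simp only [SimpleGraph.Walk.support_cons, List.nodup_cons] at this
          exact this.1 (List.mem_cons.mpr (Or.inr q'.start_mem_support))
      · exact ih hp.of_cons hw hwy hv

/-- Through a degree-one vertex there is a unique edge. -/
lemma unique_edge_of_degree_one {V : Type*} [Fintype V] (G : SimpleGraph V)
    [DecidableRel G.Adj] {w : V} (hw : G.degree w = 1) {e₁ e₂ : Sym2 V}
    (h₁ : e₁ ∈ G.edgeSet) (h₂ : e₂ ∈ G.edgeSet) (hw₁ : w ∈ e₁) (hw₂ : w ∈ e₂) :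
    e₁ = e₂ := by
  obtain ⟨y₁, rfl⟩ := Sym2.mem_iff_exists.mp hw₁
  obtain ⟨y₂, rfl⟩ := Sym2.mem_iff_exists.mp hw₂
  rw [SimpleGraph.mem_edgeSet] at h₁ h₂
  obtain ⟨a, ha⟩ := Finset.card_eq_one.mp hw
  have e1 : y₁ = a := by
    have := (G.mem_neighborFinset w y₁).mpr h₁
    rw [ha] at this; simpa using this
  have e2 : y₂ = a := by
    have := (G.mem_neighborFinset w y₂).mpr h₂
    rw [ha] at this; simpa using this
  rw [e1, e2]

/-- A pendant edge on a path must contain an endpoint of the path as its pendant vertex. -/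
lemma pendant_vertex_endpoint {V : Type*} [Fintype V] (G : SimpleGraph V)
    [DecidableRel G.Adj] {u v w : V} {p : G.Walk u v} (hp : p.IsPath)
    {e : Sym2 V} (he : e ∈ p.edges) (hwe : w ∈ e) (hw : G.degree w = 1) :
    w = u ∨ w = v := by
  by_contra hc
  push_neg at hc
  obtain ⟨y, rfl⟩ := Sym2.mem_iff_exists.mp hwe
  have hws : w ∈ p.support := p.fst_mem_support_of_mem_edges he
  obtain ⟨a, b, hab, ha, hb⟩ := internal_two_neighbors G p hp hws hc.1 hc.2
  have h2 : 2 ≤ G.degree w := by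
    rw [← SimpleGraph.card_neighborFinset_eq_degree]
    refine Finset.one_lt_card.mpr ⟨a, ?_, b, ?_, hab⟩ <;>
      simp [SimpleGraph.mem_neighborFinset, ha, hb]
  omega

/-- If `T` is a tree, then the set of its pendant edges is an edge general position set. -/
theorem pendantEdges_isEdgeGPSet_of_tree {V : Type*} [Fintype V] (G : SimpleGraph V)
    [DecidableRel G.Adj] (hT : G.IsTree) :
    IsEdgeGPSet G (pendantEdges G) := by
  constructor
  · intro e he; exact he.1
  · intro u v p hgeo e₁ h₁ e₂ h₂ e₃ h₃ hp₁ hp₂ hp₃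
    have hpath : p.IsPath := p.isPath_of_length_eq_dist hgeo
    obtain ⟨w₁, hw₁e, hw₁⟩ := h₁.2
    obtain ⟨w₂, hw₂e, hw₂⟩ := h₂.2
    obtain ⟨w₃, hw₃e, hw₃⟩ := h₃.2
    have k₁ := pendant_vertex_endpoint G hpath hp₁ hw₁e hw₁
    have k₂ := pendant_vertex_endpoint G hpath hp₂ hw₂e hw₂
    have k₃ := pendant_vertex_endpoint G hpath hp₃ hw₃e hw₃
    rcases k₁ with rfl | rfl <;> rcases k₂ with rfl | rfl <;> rcases k₃ with rfl | rfl <;>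
      first
        | exact Or.inl (unique_edge_of_degree_one G hw₁ h₁.1 h₂.1 hw₁e hw₂e)
        | exact Or.inr (Or.inl (unique_edge_of_degree_one G hw₁ h₁.1 h₃.1 hw₁e hw₃e))
        | exact Or.inr (Or.inr (unique_edge_of_degree_one G hw₂ h₂.1 h₃.1 hw₂e hw₃e))
end

section
/- If T is a tree (a connected acyclic graph), then every edge general position set of T has cardinality at most the number of pendant edges of T. -/
open SimpleGraph

/-!
Let `e = ab` be an edge of `S`. If another edge `f` of `S` lay in the component of `T - e`
containing `a` and a third one `g` in the component containing `b`, the path joining the far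
endpoints of `f` and `g` would be a geodesic through `f`, `e` and `g`. So one of the two
components, say that of `a`, contains no other edge of `S`, and its vertex farthest from `b` is
a leaf `ℓ(e)` of `T`. Distinct edges `e`, `e'` of `S` cannot get the same leaf: a vertex cut
off by both would reach an endpoint of `e` avoiding `e`, hence cross `e'`, hence reach an
endpoint of `e'` avoiding `e`. Nor can they get the two ends of one pendant edge, since crossing
that edge stays on one side of `e` or of `e'`. So a pendant edge at each leaf `ℓ(e)` maps `S`
injectively into the pendant edges.
-/

namespace SimpleGraph

open Walk

variable {V : Type*} {G : SimpleGraph V} {S : Set (Sym2 V)} {e e' : Sym2 V} {a b u v x y z t : V}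

theorem IsAcyclic.length_eq_dist_of_isPath (hG : G.IsAcyclic) {p : G.Walk u v} (hp : p.IsPath) :
    p.length = G.dist u v := by
  obtain ⟨q, hq, hlen⟩ := p.reachable.exists_path_of_dist
  rw [← hlen, Subtype.mk.inj <| (hG.subsingleton_path u v).elim ⟨p, hp⟩ ⟨q, hq⟩]

theorem IsAcyclic.not_reachable_deleteEdges (hG : G.IsAcyclic) (hab : G.Adj a b) :
    ¬ (G.deleteEdges {s(a, b)}).Reachable a b :=
  isBridge_iff.mp (isAcyclic_iff_forall_adj_isBridge.mp hG hab)

theorem Reachable.reachable_deleteEdges_or (h : G.Reachable x a) (b : V) :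
    (G.deleteEdges {s(a, b)}).Reachable x a ∨ (G.deleteEdges {s(a, b)}).Reachable x b := by
  obtain ⟨p⟩ := h
  induction p with
  | nil => exact .inl .rfl
  | @cons x m c hxm _ ih =>
    by_cases hxe : s(x, m) = s(c, b)
    · rcases Sym2.eq_iff.mp hxe with ⟨rfl, -⟩ | ⟨rfl, -⟩
      exacts [.inl .rfl, .inr .rfl]
    · have hH : (G.deleteEdges {s(c, b)}).Adj x m := deleteEdges_adj.mpr ⟨hxm, hxe⟩
      exact ih.imp hH.reachable.trans hH.reachable.trans

theorem IsAcyclic.exists_isPath_mem_edges (hG : G.IsAcyclic) (hxy : G.Adj x y)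
    (hxa : G.Reachable x a) : ∃ (u : V) (p : G.Walk u a), p.IsPath ∧ s(x, y) ∈ p.edges := by
  classical
  obtain ⟨p, hp⟩ := hxa.exists_isPath
  by_cases hf : s(x, y) ∈ p.edges
  · exact ⟨x, p, hp, hf⟩
  have hy : y ∉ p.support := fun hy => hf <| p.edges_takeUntil_subset_edges hy <|
    isBridge_iff_forall_walk_mem_edges.mp (isAcyclic_iff_forall_adj_isBridge.mp hG hxy) _
  exact ⟨y, cons hxy.symm p, hp.cons hy, by simp [Sym2.eq_swap]⟩

theorem IsAcyclic.isPath_append_cons (hG : G.IsAcyclic) (hab : G.Adj a b)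
    {p : (G.deleteEdges {s(a, b)}).Walk x a} {q : (G.deleteEdges {s(a, b)}).Walk b z}
    (hp : p.IsPath) (hq : q.IsPath) :
    ((p.mapLe (deleteEdges_le _)).append (cons hab (q.mapLe (deleteEdges_le _)))).IsPath := by
  classical
  rw [isPath_def, support_append, support_cons, List.tail_cons, support_mapLe_eq_support,
    support_mapLe_eq_support, List.nodup_append]
  refine ⟨hp.support_nodup, hq.support_nodup, fun v hvp w hvq hvw => ?_⟩
  subst hvw
  exact hG.not_reachable_deleteEdges hab
    (.trans ⟨(p.dropUntil v hvp).reverse⟩ ⟨(q.takeUntil v hvq).reverse⟩)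

theorem IsAcyclic.exists_isGeodesic_mem_edges (hG : G.IsAcyclic) (hab : G.Adj a b)
    (hxy : (G.deleteEdges {s(a, b)}).Adj x y) (hxa : (G.deleteEdges {s(a, b)}).Reachable x a)
    (hzt : (G.deleteEdges {s(a, b)}).Adj z t) (hzb : (G.deleteEdges {s(a, b)}).Reachable z b) :
    ∃ (u v : V) (W : G.Walk u v), IsGeodesic G W ∧
      s(x, y) ∈ W.edges ∧ s(a, b) ∈ W.edges ∧ s(z, t) ∈ W.edges := by
  have hH := hG.anti (G.deleteEdges_le {s(a, b)})
  obtain ⟨u, p, hp, hxyp⟩ := hH.exists_isPath_mem_edges hxy hxa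
  obtain ⟨v, q, hq, hztq⟩ := hH.exists_isPath_mem_edges hzt hzb
  refine ⟨u, v, _, hG.length_eq_dist_of_isPath (hG.isPath_append_cons hab hp hq.reverse), ?_⟩
  simp [hxyp, hztq]

/-- The component of `G - e` containing `v` contains no endpoint of another edge of `S`. -/
def CutsOff (G : SimpleGraph V) (S : Set (Sym2 V)) (e : Sym2 V) (v : V) : Prop :=
  ∀ f ∈ S, f ≠ e → ∀ x ∈ f, ¬ (G.deleteEdges {e}).Reachable v x

theorem CutsOff.of_reachable (h : G.CutsOff S e u) (huv : (G.deleteEdges {e}).Reachable u v) :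
    G.CutsOff S e v :=
  fun f hf hfe x hx hvx => h f hf hfe x hx (huv.trans hvx)

theorem IsEdgeGPSet.cutsOff_or (hG : G.IsAcyclic) (hS : IsEdgeGPSet G S)
    (he : s(a, b) ∈ S) : G.CutsOff S s(a, b) a ∨ G.CutsOff S s(a, b) b := by
  unfold CutsOff
  by_contra! ⟨⟨f, hf, hfe, x, hxf, hax⟩, ⟨g, hg, hge, z, hzg, hbz⟩⟩
  obtain ⟨y, rfl⟩ := Sym2.mem_iff_exists.mp hxf
  obtain ⟨t, rfl⟩ := Sym2.mem_iff_exists.mp hzg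
  have hab : G.Adj a b := hS.1 he
  have hxy : (G.deleteEdges {s(a, b)}).Adj x y := deleteEdges_adj.mpr ⟨hS.1 hf, hfe⟩
  have hzt : (G.deleteEdges {s(a, b)}).Adj z t := deleteEdges_adj.mpr ⟨hS.1 hg, hge⟩
  have hfg : s(x, y) ≠ s(z, t) := by
    intro hfg
    have hxz : (G.deleteEdges {s(a, b)}).Reachable x z := by
      rcases Sym2.mem_iff.mp (hfg ▸ Sym2.mem_mk_left x y) with rfl | rfl
      exacts [.rfl, hzt.symm.reachable]
    exact hG.not_reachable_deleteEdges hab (hax.trans (hxz.trans hbz.symm))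
  obtain ⟨u, v, W, hW, hfW, heW, hgW⟩ :=
    hG.exists_isGeodesic_mem_edges hab hxy hax.symm hzt hbz.symm
  rcases hS.2 W hW _ hf _ he _ hg hfW heW hgW with h | h | h
  exacts [hfe h, hfg h, hge h.symm]

theorem IsTree.exists_degree_eq_one_reachable_deleteEdges [Fintype V] [DecidableRel G.Adj]
    (hG : G.IsTree) (hab : G.Adj a b) :
    ∃ ℓ, G.degree ℓ = 1 ∧ (G.deleteEdges {s(a, b)}).Reachable ℓ a := by
  classical
  obtain ⟨ℓ, hℓ, hmax⟩ :=
    (Finset.univ.filter ((G.deleteEdges {s(a, b)}).Reachable · a)).exists_max_image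
      (G.dist · b) ⟨a, by simp⟩
  simp only [Finset.mem_filter, Finset.mem_univ, true_and] at hℓ hmax
  have hℓb : ℓ ≠ b := by
    rintro rfl
    exact hG.isAcyclic.not_reachable_deleteEdges hab hℓ.symm
  obtain ⟨p, hp, hlen⟩ := hG.connected.exists_path_of_dist ℓ b
  have hnil : ¬ p.Nil := not_nil_of_ne hℓb
  refine ⟨ℓ, degree_eq_one_iff_existsUnique_adj.mpr ⟨p.snd, p.adj_snd hnil, fun m hm => ?_⟩,
    hℓ⟩
  refine hG.isAcyclic.eq_snd_of_adj_start hp hm (by_contra fun hmp => ?_)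
  have hlen' := hG.isAcyclic.length_eq_dist_of_isPath (hp.cons hmp (h := hm.symm))
  have hme : s(m, ℓ) ≠ s(a, b) := by
    rintro h
    rcases Sym2.eq_iff.mp h with ⟨rfl, rfl⟩ | ⟨rfl, rfl⟩
    exacts [hℓb rfl, hmp p.end_mem_support]
  have hma := (deleteEdges_adj.mpr ⟨hm.symm, hme⟩).reachable.trans hℓ
  have := hmax m hma
  simp only [length_cons] at hlen'
  omega

theorem IsEdgeGPSet.exists_degree_eq_one_cutsOff [Fintype V] [DecidableRel G.Adj]
    (hG : G.IsTree) (hS : IsEdgeGPSet G S) (he : e ∈ S) :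
    ∃ ℓ, G.degree ℓ = 1 ∧ G.CutsOff S e ℓ := by
  cases e with | h a b
  have hab : G.Adj a b := hS.1 he
  rcases hS.cutsOff_or hG.isAcyclic he with h | h
  · obtain ⟨ℓ, hℓ, hℓa⟩ := hG.exists_degree_eq_one_reachable_deleteEdges hab
    exact ⟨ℓ, hℓ, h.of_reachable hℓa.symm⟩
  · obtain ⟨ℓ, hℓ, hℓb⟩ := hG.exists_degree_eq_one_reachable_deleteEdges hab.symm
    rw [Sym2.eq_swap] at hℓb
    exact ⟨ℓ, hℓ, h.of_reachable hℓb.symm⟩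

theorem Preconnected.eq_of_cutsOff (hG : G.Preconnected) (he : e ∈ S) (he' : e' ∈ S)
    (h : G.CutsOff S e v) (h' : G.CutsOff S e' v) : e = e' := by
  classical
  by_contra hne
  cases e with | h a b
  cases e' with | h c d
  obtain ⟨w, hw, W⟩ : ∃ w ∈ s(a, b), (G.deleteEdges {s(a, b)}).Reachable v w :=
    ((hG v a).reachable_deleteEdges_or b).elim (⟨a, Sym2.mem_mk_left a b, ·⟩)
      (⟨b, Sym2.mem_mk_right a b, ·⟩)
  obtain ⟨W⟩ := W
  have hcW : c ∈ W.support := by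
    have := (W.mapLe (deleteEdges_le _)).mem_edges_of_not_reachable_deleteEdges
      (h' _ he hne w hw)
    simpa using (W.mapLe (deleteEdges_le _)).fst_mem_support_of_mem_edges this
  exact h _ he' (Ne.symm hne) c (Sym2.mem_mk_left c d) ⟨W.takeUntil c hcW⟩

theorem Preconnected.eq_of_cutsOff_of_adj (hG : G.Preconnected) (he : e ∈ S) (he' : e' ∈ S)
    (h : G.CutsOff S e u) (h' : G.CutsOff S e' v) (huv : G.Adj u v) : e = e' := by
  by_cases hu : s(u, v) = e
  · by_contra hne
    have hvu : (G.deleteEdges {e'}).Reachable v u :=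
      (deleteEdges_adj.mpr ⟨huv.symm, by rw [Sym2.eq_swap, hu]; exact hne⟩).reachable
    exact hne (hG.eq_of_cutsOff he he' h (h'.of_reachable hvu))
  · exact hG.eq_of_cutsOff he he' (h.of_reachable (deleteEdges_adj.mpr ⟨huv, hu⟩).reachable) h'

end SimpleGraph

theorem exists_mem_pendantEdges_of_degree_eq_one {V : Type*} [Fintype V] {G : SimpleGraph V}
    [DecidableRel G.Adj] {v : V} (hv : G.degree v = 1) : ∃ p ∈ pendantEdges G, v ∈ p := by
  obtain ⟨w, hvw, -⟩ := degree_eq_one_iff_existsUnique_adj.mp hv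
  exact ⟨s(v, w), ⟨hvw, v, Sym2.mem_mk_left v w, hv⟩, Sym2.mem_mk_left v w⟩

/-- If `T` is a tree, then every edge general position set of `T` has cardinality at most
the number of pendant edges of `T`. -/
theorem egp_le_pendantEdges_of_tree {V : Type*} [Fintype V] (G : SimpleGraph V)
    [DecidableRel G.Adj] (hT : G.IsTree) (S : Set (Sym2 V)) (hS : IsEdgeGPSet G S) :
    S.ncard ≤ (pendantEdges G).ncard := by
  have := hT.connected.nonempty
  choose! ℓ hℓ hcut using fun e (he : e ∈ S) => hS.exists_degree_eq_one_cutsOff hT he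
  choose! p hp hℓp using fun e (he : e ∈ S) =>
    exists_mem_pendantEdges_of_degree_eq_one (hℓ e he)
  refine Set.ncard_le_ncard_of_injOn p hp (fun e he e' he' hpp => ?_) (Set.toFinite _)
  have hG := hT.connected.preconnected
  by_cases hℓℓ : ℓ e = ℓ e'
  · exact hG.eq_of_cutsOff he he' (hcut e he) (hℓℓ ▸ hcut e' he')
  have hpe : p e = s(ℓ e, ℓ e') :=
    (Sym2.mem_and_mem_iff hℓℓ).mp ⟨hℓp e he, hpp ▸ hℓp e' he'⟩
  have hadj : s(ℓ e, ℓ e') ∈ G.edgeSet := hpe ▸ (hp e he).1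
  exact hG.eq_of_cutsOff_of_adj he he' (hcut e he) (hcut e' he') hadj
end

section
/- If r ≥ 2, then the edge general position number of the grid P_r □ P_2 equals r + 2, i.e., gp_e(P_r □ P_2) = r + 2. -/
/-!
Write `x` for the column and `z` for the row of a vertex of `P_r □ P_2`. The distance is
`|Δx| + |Δz|`, which is the sum of the net changes of the three potentials `z`, `min x 1` and
`x - 1` (truncated at `0`); exactly one of them changes, by one, along each edge. So along a
geodesic the total variation of each potential equals its net change: a geodesic contains at most
one vertical edge and at most one edge between columns `0` and `1`, and the `r` vertical edges
together with these two edges form an edge general position set.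

Conversely, the staircase along one row to column `c`, across the vertical edge at `c` and along
the other row is a geodesic. It contains every horizontal edge in its column range whose row,
after swapping the two rows to the right of column `c` (`flipRow`), is its starting row. Hence if
`S` contains the vertical edge at `c`, no two horizontal edges of `S` have the same flipped row,
and `S` has at most two horizontal edges. If `S` has no vertical edge, three horizontal edges of
`S` in one row would lie on a straight geodesic, so `|S| ≤ 4 ≤ r + 2`.
-/

open SimpleGraph

/-- The grid graph `P_r □ P_s`, the Cartesian (box) product of two path graphs. -/
def gridGraph (r s : ℕ) : SimpleGraph (Fin r × Fin s) :=
  SimpleGraph.boxProd (pathGraph r) (pathGraph s)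

namespace SimpleGraph

variable {V : Type*} {G : SimpleGraph V}

def edgeVariation (f : V → ℕ) : Sym2 V → ℕ :=
  Sym2.lift ⟨fun a b => Nat.dist (f a) (f b), fun _ _ => Nat.dist_comm _ _⟩

@[simp]
lemma edgeVariation_mk (f : V → ℕ) (a b : V) :
    edgeVariation f s(a, b) = Nat.dist (f a) (f b) := rfl

namespace Walk

def variation (f : V → ℕ) {u v : V} (p : G.Walk u v) : ℕ :=
  (p.edges.map (edgeVariation f)).sum

@[simp]
lemma variation_cons (f : V → ℕ) {u v w : V} (h : G.Adj u v) (p : G.Walk v w) :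
    (cons h p).variation f = Nat.dist (f u) (f v) + p.variation f := rfl

lemma natDist_le_variation (f : V → ℕ) {u v : V} :
    ∀ p : G.Walk u v, Nat.dist (f u) (f v) ≤ p.variation f
  | nil => by simp
  | cons (v := w) _ p => by
    rw [variation_cons]
    exact (Nat.dist.triangle_inequality _ (f w) _).trans
      (Nat.add_le_add_left (p.natDist_le_variation f) _)

lemma two_le_variation (f : V → ℕ) {u v : V} (p : G.Walk u v) {e e' : Sym2 V} (hne : e ≠ e')
    (he : e ∈ p.edges) (he' : e' ∈ p.edges)
    (hfe : 0 < edgeVariation f e) (hfe' : 0 < edgeVariation f e') : 2 ≤ p.variation f := by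
  classical
  have hsum := ((List.perm_cons_erase he).map (edgeVariation f)).sum_eq
  have hle := List.le_sum_of_mem (List.mem_map_of_mem (f := edgeVariation f)
    ((List.mem_erase_of_ne hne.symm).2 he'))
  rw [variation, hsum, List.map_cons, List.sum_cons]
  omega

end Walk

end SimpleGraph

namespace gridGraph

variable {r : ℕ}

lemma adj_iff {u v : Fin r × Fin 2} :
    (gridGraph r 2).Adj u v ↔
      (u.1.val + 1 = v.1.val ∨ v.1.val + 1 = u.1.val) ∧ u.2.val = v.2.val ∨
      (u.2.val + 1 = v.2.val ∨ v.2.val + 1 = u.2.val) ∧ u.1.val = v.1.val := by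
  simp [gridGraph, boxProd_adj, pathGraph_adj, Fin.ext_iff]

def hEdge (z : Fin 2) (g : ℕ) (hg : g + 1 < r) : Sym2 (Fin r × Fin 2) :=
  s((⟨g, by omega⟩, z), (⟨g + 1, hg⟩, z))

def vEdge (c : Fin r) : Sym2 (Fin r × Fin 2) :=
  s((c, 0), (c, 1))

lemma hEdge_mem_edgeSet (z : Fin 2) (g : ℕ) (hg : g + 1 < r) :
    hEdge z g hg ∈ (gridGraph r 2).edgeSet := by
  simp [hEdge, adj_iff]

lemma vEdge_mem_edgeSet (c : Fin r) : vEdge c ∈ (gridGraph r 2).edgeSet := by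
  simp [vEdge, adj_iff]

lemma hEdge_inj {z z' : Fin 2} {g g' : ℕ} {hg : g + 1 < r} {hg' : g' + 1 < r} :
    hEdge z g hg = hEdge z' g' hg' ↔ z = z' ∧ g = g' := by
  simp only [hEdge, Sym2.eq_iff, Prod.mk.injEq, Fin.mk.injEq]
  omega

lemma vEdge_injective : Function.Injective (vEdge (r := r)) := by
  intro c c' h
  simpa [vEdge, Sym2.eq_iff] using h

lemma hEdge_ne_vEdge {z : Fin 2} {g : ℕ} {hg : g + 1 < r} {c : Fin r} :
    hEdge z g hg ≠ vEdge c := by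
  simp only [hEdge, vEdge, ne_eq, Sym2.eq_iff, Prod.mk.injEq]
  rintro (⟨⟨-, rfl⟩, -, h⟩ | ⟨⟨-, rfl⟩, -, h⟩) <;> exact absurd h (by decide)

lemma edge_cases {e : Sym2 (Fin r × Fin 2)} (he : e ∈ (gridGraph r 2).edgeSet) :
    (∃ c, e = vEdge c) ∨ ∃ z g hg, e = hEdge z g hg := by
  induction e using Sym2.ind with | _ u v => ?_
  obtain ⟨⟨x, hx⟩, z⟩ := u
  obtain ⟨⟨x', hx'⟩, z'⟩ := v
  rw [mem_edgeSet, adj_iff] at he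
  dsimp only at he
  rcases he with ⟨rfl | rfl, hz⟩ | ⟨hz, rfl⟩
  · obtain rfl := Fin.ext hz
    exact .inr ⟨z, x, hx', rfl⟩
  · obtain rfl := Fin.ext hz
    exact .inr ⟨z, x', hx, Sym2.eq_swap⟩
  · left
    refine ⟨⟨x, hx⟩, ?_⟩
    fin_cases z <;> fin_cases z' <;> simp [vEdge] at hz ⊢

def rowWalk (z : Fin 2) (a : ℕ) :
    (k : ℕ) → (h : a + k < r) → (gridGraph r 2).Walk (⟨a, by omega⟩, z) (⟨a + k, h⟩, z)
  | 0, _ => .nil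
  | k + 1, h => (rowWalk z a k (by omega)).concat (adj_iff.2 (.inl ⟨.inl rfl, rfl⟩))

lemma length_rowWalk (z : Fin 2) (a : ℕ) :
    ∀ (k : ℕ) (h : a + k < r), (rowWalk z a k h).length = k
  | 0, _ => rfl
  | k + 1, h => by rw [rowWalk, Walk.length_concat, length_rowWalk]

lemma hEdge_mem_rowWalk (z : Fin 2) (a : ℕ) {g : ℕ} (hg : g + 1 < r) (hag : a ≤ g) :
    ∀ (k : ℕ) (h : a + k < r), g < a + k → hEdge z g hg ∈ (rowWalk z a k h).edges
  | 0, _, hgk => absurd hgk (by omega)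
  | k + 1, h, hgk => by
    rw [rowWalk, Walk.edges_concat, List.concat_eq_append, List.mem_append]
    rcases Nat.lt_or_ge g (a + k) with hgk' | hgk'
    · exact .inl (hEdge_mem_rowWalk z a hg hag k _ hgk')
    · obtain rfl : g = a + k := by omega
      exact .inr (List.mem_singleton_self _)

lemma adj_rev (c : Fin r) (x : Fin 2) : (gridGraph r 2).Adj (c, x) (c, x.rev) := by
  fin_cases x <;> simp [adj_iff]

lemma vEdge_eq (c : Fin r) (x : Fin 2) : s((c, x), (c, x.rev)) = vEdge c := by
  fin_cases x
  · rfl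
  · exact Sym2.eq_swap

def flipRow (c : ℕ) (z : Fin 2) (g : ℕ) : Fin 2 :=
  if g < c then z else z.rev

def stairWalk (x : Fin 2) (a k l : ℕ) (h : a + k + l < r) :
    (gridGraph r 2).Walk (⟨a, by omega⟩, x) (⟨a + k + l, h⟩, x.rev) :=
  (rowWalk x a k (by omega)).append (.cons (adj_rev _ x) (rowWalk x.rev (a + k) l h))

lemma length_stairWalk (x : Fin 2) (a k l : ℕ) (h : a + k + l < r) :
    (stairWalk x a k l h).length = k + l + 1 := by
  rw [stairWalk, Walk.length_append, Walk.length_cons, length_rowWalk, length_rowWalk]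
  omega

lemma vEdge_mem_stairWalk (x : Fin 2) (a k l : ℕ) (h : a + k + l < r) :
    vEdge ⟨a + k, by omega⟩ ∈ (stairWalk x a k l h).edges := by
  simp [stairWalk, Walk.edges_append, vEdge_eq]

lemma hEdge_mem_stairWalk (x : Fin 2) (a k l : ℕ) (h : a + k + l < r) {z : Fin 2} {g : ℕ}
    (hg : g + 1 < r) (hag : a ≤ g) (hgb : g < a + k + l) (hz : flipRow (a + k) z g = x) :
    hEdge z g hg ∈ (stairWalk x a k l h).edges := by
  rw [stairWalk, Walk.edges_append, Walk.edges_cons, List.mem_append, List.mem_cons]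
  unfold flipRow at hz
  split_ifs at hz with hgc
  · exact .inl (hz ▸ hEdge_mem_rowWalk z a hg hag k _ hgc)
  · rw [← hz, Fin.rev_rev] at *
    exact .inr (.inr (hEdge_mem_rowWalk _ (a + k) hg (by omega) l h hgb))

def rowPot (v : Fin r × Fin 2) : ℕ := v.2

def firstGapPot (v : Fin r × Fin 2) : ℕ := min v.1 1

def tailPot (v : Fin r × Fin 2) : ℕ := v.1 - 1

lemma natDist_add_natDist_eq_sum_natDist_pot (u v : Fin r × Fin 2) :
    Nat.dist u.1 v.1 + Nat.dist u.2 v.2 = Nat.dist (rowPot u) (rowPot v) +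
      Nat.dist (firstGapPot u) (firstGapPot v) + Nat.dist (tailPot u) (tailPot v) := by
  simp only [rowPot, firstGapPot, tailPot, Nat.dist]
  omega

lemma sum_natDist_pot_eq_one_of_adj {u v : Fin r × Fin 2} (h : (gridGraph r 2).Adj u v) :
    Nat.dist (rowPot u) (rowPot v) + Nat.dist (firstGapPot u) (firstGapPot v) +
      Nat.dist (tailPot u) (tailPot v) = 1 := by
  rw [adj_iff] at h
  simp only [rowPot, firstGapPot, tailPot, Nat.dist]
  omega

lemma length_eq_variation_add {u v : Fin r × Fin 2} :
    ∀ p : (gridGraph r 2).Walk u v,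
      p.length = p.variation rowPot + p.variation firstGapPot + p.variation tailPot
  | .nil => rfl
  | .cons h p => by
    have := sum_natDist_pot_eq_one_of_adj h
    rw [Walk.length_cons, Walk.variation_cons, Walk.variation_cons, Walk.variation_cons,
      length_eq_variation_add p]
    omega

lemma natDist_add_natDist_le_length {u v : Fin r × Fin 2} (p : (gridGraph r 2).Walk u v) :
    Nat.dist u.1 v.1 + Nat.dist u.2 v.2 ≤ p.length := by
  rw [natDist_add_natDist_eq_sum_natDist_pot, length_eq_variation_add p]
  have := p.natDist_le_variation rowPot
  have := p.natDist_le_variation firstGapPot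
  have := p.natDist_le_variation tailPot
  omega

lemma dist_le_natDist_add (u v : Fin r × Fin 2) :
    (gridGraph r 2).dist u v ≤ Nat.dist u.1 v.1 + Nat.dist u.2 v.2 := by
  wlog huv : u.1.val ≤ v.1.val generalizing u v
  · rw [dist_comm, Nat.dist_comm u.1.val, Nat.dist_comm u.2.val]
    exact this v u (by omega)
  obtain ⟨⟨a, ha⟩, x⟩ := u
  obtain ⟨⟨b, hb⟩, z⟩ := v
  obtain ⟨k, rfl⟩ := Nat.exists_eq_add_of_le huv
  obtain rfl | rfl : z = x ∨ z = x.rev := by fin_cases x <;> fin_cases z <;> simp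
  · refine (dist_le (rowWalk z a k hb)).trans ?_
    simp [length_rowWalk, Nat.dist]
  · refine (dist_le (stairWalk x a 0 k hb)).trans ?_
    rw [length_stairWalk]
    simp only [Fin.val_rev, Nat.dist]
    omega

lemma dist_eq (u v : Fin r × Fin 2) :
    (gridGraph r 2).dist u v = Nat.dist u.1 v.1 + Nat.dist u.2 v.2 := by
  have hconn : (gridGraph r 2).Preconnected :=
    (pathGraph_preconnected r).boxProd (pathGraph_preconnected 2)
  obtain ⟨p, hp⟩ := (hconn u v).exists_walk_length_eq_dist
  exact (dist_le_natDist_add u v).antisymm (hp ▸ natDist_add_natDist_le_length p)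

lemma isGeodesic_stairWalk (x : Fin 2) (a k l : ℕ) (h : a + k + l < r) :
    IsGeodesic (gridGraph r 2) (stairWalk x a k l h) := by
  rw [IsGeodesic, length_stairWalk, dist_eq]
  simp only [Fin.val_rev, Nat.dist]
  omega

lemma exists_isGeodesic_stair (x : Fin 2) {a c b : ℕ} (hac : a ≤ c) (hcb : c ≤ b) (hb : b < r) :
    ∃ (u v : Fin r × Fin 2) (p : (gridGraph r 2).Walk u v), IsGeodesic (gridGraph r 2) p ∧
      vEdge ⟨c, by omega⟩ ∈ p.edges ∧
      ∀ z g (hg : g + 1 < r), a ≤ g → g < b → flipRow c z g = x → hEdge z g hg ∈ p.edges := by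
  obtain ⟨k, rfl⟩ := Nat.exists_eq_add_of_le hac
  obtain ⟨l, rfl⟩ := Nat.exists_eq_add_of_le hcb
  exact ⟨_, _, stairWalk x a k l hb, isGeodesic_stairWalk x a k l hb,
    vEdge_mem_stairWalk x a k l hb, fun _ _ hg => hEdge_mem_stairWalk x a k l hb hg⟩

section Geodesic

variable {u v : Fin r × Fin 2} {p : (gridGraph r 2).Walk u v}

lemma variation_le_one_of_isGeodesic (hp : IsGeodesic (gridGraph r 2) p) :
    p.variation rowPot ≤ 1 ∧ p.variation firstGapPot ≤ 1 := by
  have hlen : p.length = _ := hp.trans (dist_eq u v)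
  rw [length_eq_variation_add, natDist_add_natDist_eq_sum_natDist_pot] at hlen
  have := p.natDist_le_variation rowPot
  have := p.natDist_le_variation firstGapPot
  have := p.natDist_le_variation tailPot
  have : Nat.dist (rowPot u) (rowPot v) ≤ 1 := by simp only [rowPot, Nat.dist]; omega
  have : Nat.dist (firstGapPot u) (firstGapPot v) ≤ 1 := by
    simp only [firstGapPot, Nat.dist]; omega
  omega

lemma eq_of_vEdge_mem_of_isGeodesic (hp : IsGeodesic (gridGraph r 2) p) {c c' : Fin r}
    (h : vEdge c ∈ p.edges) (h' : vEdge c' ∈ p.edges) : c = c' := by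
  by_contra hne
  have := p.two_le_variation rowPot (vEdge_injective.ne hne) h h'
    (by simp [vEdge, rowPot, Nat.dist]) (by simp [vEdge, rowPot, Nat.dist])
  have := (variation_le_one_of_isGeodesic hp).1
  omega

lemma eq_of_hEdge_zero_mem_of_isGeodesic (hp : IsGeodesic (gridGraph r 2) p) (hr : 1 < r)
    {z z' : Fin 2} (h : hEdge z 0 hr ∈ p.edges) (h' : hEdge z' 0 hr ∈ p.edges) : z = z' := by
  by_contra hne
  have := p.two_le_variation firstGapPot (fun he => hne (hEdge_inj.1 he).1) h h'
    (by simp [hEdge, firstGapPot, Nat.dist]) (by simp [hEdge, firstGapPot, Nat.dist])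
  have := (variation_le_one_of_isGeodesic hp).2
  omega

end Geodesic

def optSet (hr : 1 < r) : Set (Sym2 (Fin r × Fin 2)) :=
  Set.range vEdge ∪ Set.range fun z => hEdge z 0 hr

lemma ncard_optSet (hr : 1 < r) : (optSet hr).ncard = r + 2 := by
  have hdisj : Disjoint (Set.range vEdge) (Set.range fun z => hEdge z 0 hr) :=
    Set.disjoint_left.2 fun _ ⟨_, hc⟩ ⟨_, hz⟩ => hEdge_ne_vEdge (hz.trans hc.symm)
  have hinj : Function.Injective fun z => hEdge z 0 hr := fun _ _ h => (hEdge_inj.1 h).1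
  rw [optSet, Set.ncard_union_eq hdisj, Set.ncard_range_of_injective vEdge_injective,
    Set.ncard_range_of_injective hinj]
  simp

lemma eq_of_mem_optSet_of_isGeodesic (hr : 1 < r) {u v : Fin r × Fin 2}
    {p : (gridGraph r 2).Walk u v} (hp : IsGeodesic (gridGraph r 2) p) {e e' : Sym2 (Fin r × Fin 2)}
    (he : e ∈ optSet hr) (he' : e' ∈ optSet hr) (hep : e ∈ p.edges) (hep' : e' ∈ p.edges)
    (hiff : e ∈ Set.range vEdge ↔ e' ∈ Set.range vEdge) : e = e' := by
  have hvert : ∀ {z : Fin 2}, hEdge z 0 hr ∉ Set.range vEdge :=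
    fun ⟨_, h⟩ => hEdge_ne_vEdge h.symm
  rcases he with ⟨c, rfl⟩ | ⟨z, rfl⟩ <;> rcases he' with ⟨c', rfl⟩ | ⟨z', rfl⟩
  · rw [eq_of_vEdge_mem_of_isGeodesic hp hep hep']
  · exact absurd (hiff.1 ⟨c, rfl⟩) hvert
  · exact absurd (hiff.2 ⟨c', rfl⟩) hvert
  · rw [eq_of_hEdge_zero_mem_of_isGeodesic hp hr hep hep']

lemma isEdgeGPSet_optSet (hr : 1 < r) : IsEdgeGPSet (gridGraph r 2) (optSet hr) := by
  refine ⟨?_, fun u v p hp e₁ h₁ e₂ h₂ e₃ h₃ m₁ m₂ m₃ => ?_⟩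
  · rintro _ (⟨c, rfl⟩ | ⟨z, rfl⟩)
    exacts [vEdge_mem_edgeSet c, hEdge_mem_edgeSet z 0 hr]
  have pigeonhole : ∀ A B C : Prop, (A ↔ B) ∨ (A ↔ C) ∨ (B ↔ C) := by tauto
  rcases pigeonhole (e₁ ∈ Set.range vEdge) (e₂ ∈ Set.range vEdge) (e₃ ∈ Set.range vEdge)
    with h | h | h
  · exact .inl (eq_of_mem_optSet_of_isGeodesic hr hp h₁ h₂ m₁ m₂ h)
  · exact .inr (.inl (eq_of_mem_optSet_of_isGeodesic hr hp h₁ h₃ m₁ m₃ h))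
  · exact .inr (.inr (eq_of_mem_optSet_of_isGeodesic hr hp h₂ h₃ m₂ m₃ h))

section UpperBound

variable {S : Set (Sym2 (Fin r × Fin 2))}

lemma hEdge_eq_of_flipRow_eq (hS : IsEdgeGPSet (gridGraph r 2) S) {c : Fin r} (hc : vEdge c ∈ S)
    {z z' : Fin 2} {g g' : ℕ} {hg : g + 1 < r} {hg' : g' + 1 < r} (h : hEdge z g hg ∈ S)
    (h' : hEdge z' g' hg' ∈ S) (hflip : flipRow c z g = flipRow c z' g') :
    hEdge z g hg = hEdge z' g' hg' := by
  obtain ⟨u, v, p, hp, hcp, hmem⟩ := exists_isGeodesic_stair (flipRow c z g)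
    (a := min (min g g') c) (c := c) (b := max (max (g + 1) (g' + 1)) c) (by omega) (by omega)
    (show _ < r by omega)
  rcases hS.2 p hp _ h _ h' _ hc (hmem z g hg (by omega) (by omega) rfl)
    (hmem z' g' hg' (by omega) (by omega) hflip.symm) hcp with he | he | he
  exacts [he, absurd he hEdge_ne_vEdge, absurd he hEdge_ne_vEdge]

lemma ncard_horizontal_le_two (hS : IsEdgeGPSet (gridGraph r 2) S) {c : Fin r}
    (hc : vEdge c ∈ S) : {e ∈ S | ∃ z g hg, e = hEdge z g hg}.ncard ≤ 2 := by
  by_contra! h3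
  obtain ⟨_, _, _, ⟨h₁, z₁, g₁, hg₁, rfl⟩, ⟨h₂, z₂, g₂, hg₂, rfl⟩, ⟨h₃, z₃, g₃, hg₃, rfl⟩,
    h₁₂, h₁₃, h₂₃⟩ := (Set.two_lt_ncard_iff (Set.toFinite _)).1 h3
  have pigeonhole : ∀ a b c : Fin 2, a = b ∨ a = c ∨ b = c := by decide
  rcases pigeonhole (flipRow c z₁ g₁) (flipRow c z₂ g₂) (flipRow c z₃ g₃) with h | h | h
  · exact h₁₂ (hEdge_eq_of_flipRow_eq hS hc h₁ h₂ h)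
  · exact h₁₃ (hEdge_eq_of_flipRow_eq hS hc h₁ h₃ h)
  · exact h₂₃ (hEdge_eq_of_flipRow_eq hS hc h₂ h₃ h)

lemma ncard_row_le_two (hS : IsEdgeGPSet (gridGraph r 2) S) (z : Fin 2) :
    {e ∈ S | ∃ g hg, e = hEdge z g hg}.ncard ≤ 2 := by
  by_contra! h3
  obtain ⟨_, _, _, ⟨h₁, g₁, hg₁, rfl⟩, ⟨h₂, g₂, hg₂, rfl⟩, ⟨h₃, g₃, hg₃, rfl⟩,
    h₁₂, h₁₃, h₂₃⟩ := (Set.two_lt_ncard_iff (Set.toFinite _)).1 h3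
  set m := max (max g₁ g₂) g₃ + 1
  obtain ⟨u, v, p, hp, -, hmem⟩ := exists_isGeodesic_stair z (a := min (min g₁ g₂) g₃) (c := m)
    (b := m) (by omega) le_rfl (show m < r by omega)
  have hflip : ∀ g, g < m → flipRow m z g = z := fun _ hg => if_pos hg
  rcases hS.2 p hp _ h₁ _ h₂ _ h₃ (hmem z g₁ hg₁ (by omega) (by omega) (hflip _ (by omega)))
    (hmem z g₂ hg₂ (by omega) (by omega) (hflip _ (by omega)))
    (hmem z g₃ hg₃ (by omega) (by omega) (hflip _ (by omega))) with he | he | he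
  exacts [h₁₂ he, h₁₃ he, h₂₃ he]

lemma ncard_le_of_isEdgeGPSet (hr : 2 ≤ r) (hS : IsEdgeGPSet (gridGraph r 2) S) :
    S.ncard ≤ r + 2 := by
  set SV := {e ∈ S | ∃ c, e = vEdge c}
  set SH := {e ∈ S | ∃ z g hg, e = hEdge z g hg}
  have hsplit : S.ncard ≤ SV.ncard + SH.ncard :=
    (Set.ncard_le_ncard fun e he => (edge_cases (hS.1 he)).imp (⟨he, ·⟩) (⟨he, ·⟩)).trans
      (Set.ncard_union_le SV SH)
  have hSV : SV.ncard ≤ r := by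
    refine (Set.ncard_le_ncard (t := Set.range vEdge) ?_).trans ?_
    · rintro _ ⟨-, c, rfl⟩
      exact ⟨c, rfl⟩
    rw [Set.ncard_range_of_injective vEdge_injective, Nat.card_eq_fintype_card, Fintype.card_fin]
  rcases SV.eq_empty_or_nonempty with hempty | ⟨_, hc, c, rfl⟩
  · have hrows :
        SH ⊆ {e ∈ S | ∃ g hg, e = hEdge 0 g hg} ∪ {e ∈ S | ∃ g hg, e = hEdge 1 g hg} := by
      rintro _ ⟨he, z, g, hg, rfl⟩
      fin_cases z
      exacts [.inl ⟨he, g, hg, rfl⟩, .inr ⟨he, g, hg, rfl⟩]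
    have := (Set.ncard_le_ncard hrows).trans (Set.ncard_union_le _ _)
    have := ncard_row_le_two hS 0
    have := ncard_row_le_two hS 1
    rw [hempty, Set.ncard_empty] at hsplit
    omega
  · have : SH.ncard ≤ 2 := ncard_horizontal_le_two hS hc
    omega

end UpperBound

end gridGraph

/-- If `r ≥ 2`, then `gp_e(P_r □ P_2) = r + 2`. -/
theorem egp_grid_two (r : ℕ) (hr : 2 ≤ r) :
    IsGreatest
      {n : ℕ | ∃ S : Set (Sym2 (Fin r × Fin 2)), IsEdgeGPSet (gridGraph r 2) S ∧ S.ncard = n}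
      (r + 2) :=
  ⟨⟨gridGraph.optSet hr, gridGraph.isEdgeGPSet_optSet hr, gridGraph.ncard_optSet hr⟩,
    fun _ ⟨_, hS, hn⟩ => hn ▸ gridGraph.ncard_le_of_isEdgeGPSet hr hS⟩
end

section
/- If r ≥ s ≥ 6, then the grid P_r □ P_s admits an isometric path edge cover consisting of r + s − 4 geodesics; consequently ip_e(P_r □ P_s) ≤ r + s − 4. -/
/-!
All the geodesics used are monotone staircases: walks along grid lines whose length is the
ℓ¹-distance between their endpoints. They are geodesics because each of the four functions
`±x ± y` changes by at most one along an edge, so no walk between the endpoints is shorter.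

Four corner paths cover most of the boundary rows and columns together with the rows `1`, `s - 2`
and columns `1`, `r - 2`: column `1` then row `0`, column `r - 2` then row `s - 1`, row `1` then
column `r - 1`, and row `s - 2` then column `0`. Each of the `s - 4` inner rows `j` is traversed by
a path with a vertical hook of length two at either end, and each of the `r - 4` inner columns by
a path with horizontal hooks. The hooks of the outermost of these pick up the four boundary edges
missed by the corner paths, for a total of `4 + (s - 4) + (r - 4) = r + s - 4` geodesics.
-/

open SimpleGraph

section Potential

variable {V : Type*} {G : SimpleGraph V} {f : V → ℤ}

theorem SimpleGraph.Walk.sub_le_length (hf : ∀ x y, G.Adj x y → f y ≤ f x + 1) {u v : V}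
    (p : G.Walk u v) : f v - f u ≤ p.length := by
  induction p with
  | nil => simp
  | cons h _ ih => have := hf _ _ h; push_cast [Walk.length_cons]; omega

theorem isGeodesic_of_length_eq_sub (hf : ∀ x y, G.Adj x y → f y ≤ f x + 1) {u v : V}
    (p : G.Walk u v) (h : (p.length : ℤ) = f v - f u) : IsGeodesic G p := by
  obtain ⟨q, hq⟩ := p.reachable.exists_walk_length_eq_dist
  have := q.sub_le_length hf
  exact le_antisymm (by omega) (dist_le p)

end Potential

namespace SimpleGraph.pathGraph

variable {n : ℕ}

def straightWalk (i j : Fin n) : (pathGraph n).Walk i j :=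
  if h : i.val < j.val then
    .cons (v := ⟨i + 1, by omega⟩) (pathGraph_adj.2 (.inl rfl)) (straightWalk ⟨i + 1, by omega⟩ j)
  else if h' : j.val < i.val then
    .cons (v := ⟨i - 1, by omega⟩) (pathGraph_adj.2 (.inr (by simp; omega)))
      (straightWalk ⟨i - 1, by omega⟩ j)
  else Walk.nil.copy rfl (Fin.ext (by omega))
termination_by ((j : ℤ) - i).natAbs

theorem length_straightWalk (i j : Fin n) :
    (straightWalk i j).length = ((j : ℤ) - i).natAbs := by
  fun_induction straightWalk i j <;> simp_all <;> omega

theorem mem_edges_straightWalk {i j k l : Fin n} (hk : k ∈ Set.uIcc i j) (hl : l ∈ Set.uIcc i j)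
    (hkl : k.val + 1 = l.val) : s(k, l) ∈ (straightWalk i j).edges := by
  simp only [Set.mem_uIcc, Fin.le_def] at hk hl
  fun_induction straightWalk i j with
  | case1 i _ ih =>
    rw [Walk.edges_cons, List.mem_cons]
    by_cases hki : k.val = i.val
    · left
      rw [Fin.ext hki, show l = ⟨i + 1, by omega⟩ from Fin.ext (by simp only; omega)]
    · exact .inr (ih (by simp only; omega) (by simp only; omega))
  | case2 i _ _ ih =>
    rw [Walk.edges_cons, List.mem_cons]
    by_cases hli : l.val = i.val
    · left
      rw [Sym2.eq_swap, Fin.ext hli, show k = ⟨i - 1, by omega⟩ from Fin.ext (by simp only; omega)]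
    · exact .inr (ih (by simp only; omega) (by simp only; omega))
  | case3 => omega

end SimpleGraph.pathGraph

namespace SimpleGraph.Walk

variable {α β : Type*} {G : SimpleGraph α} {H : SimpleGraph β}

@[simp]
theorem length_boxProdLeft {a₁ a₂ : α} (b : β) (p : G.Walk a₁ a₂) :
    (p.boxProdLeft H b).length = p.length :=
  length_map _ _

@[simp]
theorem length_boxProdRight {b₁ b₂ : β} (a : α) (p : H.Walk b₁ b₂) :
    (p.boxProdRight G a).length = p.length :=
  length_map _ _

theorem mem_edges_boxProdLeft {a₁ a₂ x x' : α} {b : β} {p : G.Walk a₁ a₂}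
    (h : s(x, x') ∈ p.edges) : s((x, b), (x', b)) ∈ (p.boxProdLeft H b).edges := by
  have := List.mem_map_of_mem (f := Sym2.map (G.boxProdLeft H b).toHom) h
  rwa [← edges_map] at this

theorem mem_edges_boxProdRight {b₁ b₂ y y' : β} {a : α} {p : H.Walk b₁ b₂}
    (h : s(y, y') ∈ p.edges) : s((a, y), (a, y')) ∈ (p.boxProdRight G a).edges := by
  have := List.mem_map_of_mem (f := Sym2.map (G.boxProdRight H a).toHom) h
  rwa [← edges_map] at this

end SimpleGraph.Walk

namespace gridGraph

variable {r s : ℕ}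

theorem adj_iff_s18 {a b : Fin r × Fin s} :
    (gridGraph r s).Adj a b ↔
      (a.1.val + 1 = b.1.val ∨ b.1.val + 1 = a.1.val) ∧ a.2 = b.2 ∨
      (a.2.val + 1 = b.2.val ∨ b.2.val + 1 = a.2.val) ∧ a.1 = b.1 := by
  rw [gridGraph, boxProd_adj, pathGraph_adj, pathGraph_adj]

theorem isGeodesic_of_length_eq {a b : Fin r × Fin s} (p : (gridGraph r s).Walk a b)
    (h : p.length = ((b.1 : ℤ) - a.1).natAbs + ((b.2 : ℤ) - a.2).natAbs) :
    IsGeodesic (gridGraph r s) p := by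
  refine isGeodesic_of_length_eq_sub (f := fun x => (if a.1 ≤ b.1 then 1 else -1) * (x.1 : ℤ) +
    (if a.2 ≤ b.2 then 1 else -1) * (x.2 : ℤ)) (fun x y hxy => ?_) p ?_
  · have := adj_iff_s18.1 hxy
    split_ifs <;> omega
  · split_ifs <;> omega

theorem forall_mem_edgeSet {P : Sym2 (Fin r × Fin s) → Prop}
    (horizontal : ∀ (x x' : Fin r) (y : Fin s), x.val + 1 = x'.val → P s((x, y), (x', y)))
    (vertical : ∀ (x : Fin r) (y y' : Fin s), y.val + 1 = y'.val → P s((x, y), (x, y'))) :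
    ∀ e ∈ (gridGraph r s).edgeSet, P e := by
  refine Sym2.ind fun ⟨x, y⟩ ⟨x', y'⟩ hadj => ?_
  have hxy := adj_iff_s18.1 hadj
  dsimp only at hxy
  rcases hxy with ⟨hx | hx, rfl⟩ | ⟨hy | hy, rfl⟩
  · exact horizontal x x' y hx
  · exact Sym2.eq_swap ▸ horizontal x' x y hx
  · exact vertical x y y' hy
  · exact Sym2.eq_swap ▸ vertical x y' y hy

end gridGraph

structure GridStaircase (r s : ℕ) where
  x₀ : ℕ
  x₁ : ℕ
  x₂ : ℕ
  y₀ : ℕ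
  y₁ : ℕ
  y₂ : ℕ
  hx₀ : x₀ < r := by omega
  hx₁ : x₁ < r := by omega
  hx₂ : x₂ < r := by omega
  hy₀ : y₀ < s := by omega
  hy₁ : y₁ < s := by omega
  hy₂ : y₂ < s := by omega

namespace GridStaircase

open pathGraph

variable {r s : ℕ} (c : GridStaircase r s)

def walk : (gridGraph r s).Walk (⟨c.x₀, c.hx₀⟩, ⟨c.y₀, c.hy₀⟩) (⟨c.x₂, c.hx₂⟩, ⟨c.y₂, c.hy₂⟩) :=
  ((straightWalk ⟨c.x₀, c.hx₀⟩ ⟨c.x₁, c.hx₁⟩).boxProdLeft _ _).append <|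
    ((straightWalk ⟨c.y₀, c.hy₀⟩ ⟨c.y₁, c.hy₁⟩).boxProdRight _ _).append <|
    ((straightWalk ⟨c.x₁, c.hx₁⟩ ⟨c.x₂, c.hx₂⟩).boxProdLeft _ _).append
    ((straightWalk ⟨c.y₁, c.hy₁⟩ ⟨c.y₂, c.hy₂⟩).boxProdRight _ _)

theorem isGeodesic_walk (hx : c.x₁ ∈ Set.uIcc c.x₀ c.x₂) (hy : c.y₁ ∈ Set.uIcc c.y₀ c.y₂) :
    IsGeodesic (gridGraph r s) c.walk := by
  apply gridGraph.isGeodesic_of_length_eq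
  unfold walk gridGraph
  simp only [Walk.length_append, Walk.length_boxProdLeft, Walk.length_boxProdRight,
    length_straightWalk]
  rw [Set.mem_uIcc] at hx hy
  omega

theorem mem_edges_walk_of_horizontal {x x' : Fin r} {y : Fin s} (hxx' : x.val + 1 = x'.val)
    (h : y.val = c.y₀ ∧ x.val ∈ Set.uIcc c.x₀ c.x₁ ∧ x'.val ∈ Set.uIcc c.x₀ c.x₁ ∨
      y.val = c.y₁ ∧ x.val ∈ Set.uIcc c.x₁ c.x₂ ∧ x'.val ∈ Set.uIcc c.x₁ c.x₂) :
    s((x, y), (x', y)) ∈ c.walk.edges := by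
  simp only [Set.mem_uIcc] at h
  unfold walk gridGraph
  simp only [Walk.edges_append, List.mem_append]
  rcases h with ⟨hy, hx, hx'⟩ | ⟨hy, hx, hx'⟩
  · obtain rfl : y = ⟨c.y₀, c.hy₀⟩ := Fin.ext hy
    refine .inl (Walk.mem_edges_boxProdLeft (mem_edges_straightWalk ?_ ?_ hxx')) <;>
      simp only [Set.mem_uIcc, Fin.le_def] <;> omega
  · obtain rfl : y = ⟨c.y₁, c.hy₁⟩ := Fin.ext hy
    refine .inr (.inr (.inl
      (Walk.mem_edges_boxProdLeft (mem_edges_straightWalk ?_ ?_ hxx')))) <;>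
      simp only [Set.mem_uIcc, Fin.le_def] <;> omega

theorem mem_edges_walk_of_vertical {x : Fin r} {y y' : Fin s} (hyy' : y.val + 1 = y'.val)
    (h : x.val = c.x₁ ∧ y.val ∈ Set.uIcc c.y₀ c.y₁ ∧ y'.val ∈ Set.uIcc c.y₀ c.y₁ ∨
      x.val = c.x₂ ∧ y.val ∈ Set.uIcc c.y₁ c.y₂ ∧ y'.val ∈ Set.uIcc c.y₁ c.y₂) :
    s((x, y), (x, y')) ∈ c.walk.edges := by
  simp only [Set.mem_uIcc] at h
  unfold walk gridGraph
  simp only [Walk.edges_append, List.mem_append]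
  rcases h with ⟨hx, hy, hy'⟩ | ⟨hx, hy, hy'⟩
  · obtain rfl : x = ⟨c.x₁, c.hx₁⟩ := Fin.ext hx
    refine .inr (.inl (Walk.mem_edges_boxProdRight (mem_edges_straightWalk ?_ ?_ hyy'))) <;>
      simp only [Set.mem_uIcc, Fin.le_def] <;> omega
  · obtain rfl : x = ⟨c.x₂, c.hx₂⟩ := Fin.ext hx
    refine .inr (.inr (.inr
      (Walk.mem_edges_boxProdRight (mem_edges_straightWalk ?_ ?_ hyy')))) <;>
      simp only [Set.mem_uIcc, Fin.le_def] <;> omega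

end GridStaircase

theorem exists_isIsometricPathEdgeCover_of_card {V ι : Type*} [Fintype ι] {G : SimpleGraph V}
    {k : ℕ} (hk : Fintype.card ι = k) {u v : ι → V} (p : ∀ i, G.Walk (u i) (v i))
    (hp : ∀ i, IsGeodesic G (p i)) (hcover : ∀ e ∈ G.edgeSet, ∃ i, e ∈ (p i).edges) :
    ∃ (u v : Fin k → V) (p : ∀ i, G.Walk (u i) (v i)), IsIsometricPathEdgeCover G k u v p := by
  let σ := (Fintype.equivFinOfCardEq hk).symm
  refine ⟨u ∘ σ, v ∘ σ, fun i => p (σ i), fun i => hp (σ i), fun e he => ?_⟩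
  obtain ⟨i, hi⟩ := hcover e he
  obtain ⟨j, rfl⟩ := σ.surjective i
  exact ⟨j, hi⟩

section Cover

variable {r s : ℕ} (hr : 5 ≤ r) (hs : 5 ≤ s)

-- The four corner paths, then one path for each inner row `j + 2` and each inner column `i + 2`.
def gridCover : Fin 4 ⊕ Fin (s - 4) ⊕ Fin (r - 4) → GridStaircase r s
  | .inl 0 => { x₀ := 1, x₁ := 1, x₂ := r - 1, y₀ := s - 1, y₁ := 0, y₂ := 0 }
  | .inl 1 => { x₀ := r - 2, x₁ := r - 2, x₂ := 0, y₀ := 0, y₁ := s - 1, y₂ := s - 1 }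
  | .inl 2 => { x₀ := 0, x₁ := 0, x₂ := r - 1, y₀ := 1, y₁ := 1, y₂ := s - 1 }
  | .inl 3 => { x₀ := r - 1, x₁ := r - 1, x₂ := 0, y₀ := s - 2, y₁ := s - 2, y₂ := 0 }
  | .inr (.inl j) => { x₀ := r - 1, x₁ := r - 1, x₂ := 0, y₀ := j, y₁ := j + 2, y₂ := j + 4 }
  | .inr (.inr i) => { x₀ := i, x₁ := i + 2, x₂ := i + 4, y₀ := 0, y₁ := s - 1, y₂ := s - 1 }

theorem isGeodesic_gridCover (i : Fin 4 ⊕ Fin (s - 4) ⊕ Fin (r - 4)) :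
    IsGeodesic (gridGraph r s) (gridCover hr hs i).walk := by
  apply GridStaircase.isGeodesic_walk <;> rcases i with i | j | i <;> try fin_cases i
  all_goals simp only [gridCover, Set.mem_uIcc]; omega

theorem exists_mem_gridCover_of_horizontal {x x' : Fin r} {y : Fin s} (h : x.val + 1 = x'.val) :
    ∃ i, s((x, y), (x', y)) ∈ (gridCover hr hs i).walk.edges := by
  refine Exists.imp (fun i => (gridCover hr hs i).mem_edges_walk_of_horizontal h) ?_
  have := x'.isLt
  have := y.isLt
  obtain hy | hy | hy | hy | hy : y.val = 0 ∨ y.val = 1 ∨ 2 ≤ y.val ∧ y.val + 3 ≤ s ∨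
      y.val = s - 2 ∨ y.val = s - 1 := by omega
  · by_cases hx : x.val = 0
    · exact ⟨.inr (.inr ⟨0, by omega⟩), by simp only [gridCover, Set.mem_uIcc]; omega⟩
    · exact ⟨.inl 0, by simp only [gridCover, Set.mem_uIcc]; omega⟩
  · exact ⟨.inl 2, by simp only [gridCover, Set.mem_uIcc]; omega⟩
  · exact ⟨.inr (.inl ⟨y - 2, by omega⟩), by simp only [gridCover, Set.mem_uIcc]; omega⟩
  · exact ⟨.inl 3, by simp only [gridCover, Set.mem_uIcc]; omega⟩
  · by_cases hx : x'.val + 2 ≤ r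
    · exact ⟨.inl 1, by simp only [gridCover, Set.mem_uIcc]; omega⟩
    · exact ⟨.inr (.inr ⟨r - 5, by omega⟩), by simp only [gridCover, Set.mem_uIcc]; omega⟩

theorem exists_mem_gridCover_of_vertical {x : Fin r} {y y' : Fin s} (h : y.val + 1 = y'.val) :
    ∃ i, s((x, y), (x, y')) ∈ (gridCover hr hs i).walk.edges := by
  refine Exists.imp (fun i => (gridCover hr hs i).mem_edges_walk_of_vertical h) ?_
  have := x.isLt
  have := y'.isLt
  obtain hx | hx | hx | hx | hx : x.val = 0 ∨ x.val = 1 ∨ 2 ≤ x.val ∧ x.val + 3 ≤ r ∨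
      x.val = r - 2 ∨ x.val = r - 1 := by omega
  · by_cases hy : y'.val + 1 = s
    · exact ⟨.inr (.inl ⟨s - 5, by omega⟩), by simp only [gridCover, Set.mem_uIcc]; omega⟩
    · exact ⟨.inl 3, by simp only [gridCover, Set.mem_uIcc]; omega⟩
  · exact ⟨.inl 0, by simp only [gridCover, Set.mem_uIcc]; omega⟩
  · exact ⟨.inr (.inr ⟨x - 2, by omega⟩), by simp only [gridCover, Set.mem_uIcc]; omega⟩
  · exact ⟨.inl 1, by simp only [gridCover, Set.mem_uIcc]; omega⟩
  · by_cases hy : y.val = 0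
    · exact ⟨.inr (.inl ⟨0, by omega⟩), by simp only [gridCover, Set.mem_uIcc]; omega⟩
    · exact ⟨.inl 2, by simp only [gridCover, Set.mem_uIcc]; omega⟩

end Cover

/-- If `r ≥ s ≥ 6`, then the grid `P_r □ P_s` admits an isometric path edge cover consisting
of `r + s - 4` geodesics; consequently `ip_e(P_r □ P_s) ≤ r + s - 4`. -/
theorem grid_ipe_cover (r s : ℕ) (hs : 6 ≤ s) (hrs : s ≤ r) :
    ∃ (u v : Fin (r + s - 4) → (Fin r × Fin s))
      (p : ∀ i, (gridGraph r s).Walk (u i) (v i)),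
      IsIsometricPathEdgeCover (gridGraph r s) (r + s - 4) u v p := by
  have hs' : 5 ≤ s := by omega
  have hr : 5 ≤ r := by omega
  refine exists_isIsometricPathEdgeCover_of_card ?_ (fun i => (gridCover hr hs' i).walk)
    (isGeodesic_gridCover hr hs') (gridGraph.forall_mem_edgeSet
      (fun _ _ _ h => exists_mem_gridCover_of_horizontal hr hs' h)
      (fun _ _ _ h => exists_mem_gridCover_of_vertical hr hs' h))
  simp only [Fintype.card_sum, Fintype.card_fin]
  omega
end
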